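/- arXiv:2510.12188 — 5 statements merged into one kernel-verified Lean document; each statement's English description precedes it below -/
import Mathlib

section
/- If α : [0,T] → (1,2) is continuously differentiable with α(0) = α₀, then the generalized identity function g(t) = ∫_0^t (t-s)^{α₀-2}/Γ(α₀-1) · s^{1-α(s)}/Γ(2-α(s)) ds satisfies g(0⁺) = 1, i.e., g extends continuously to t = 0 with value 1. -/
/-!
Put `β u = 2 - α u`, `b = 2 - α₀` and `a = α₀ - 1`, so that `a + b = 1` and `g` is the
Riemann–Liouville integral of order `a` of `u ↦ u ^ (β u - 1) / Γ (β u)`. For a constant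
order `β ≡ b` the Beta integral gives exactly `t ^ (a + b - 1) / Γ(a + b) = 1`.
Since `α` is `C¹`, `|β u - b| ≤ L t` on `[0, t]`. For `u ≤ 1` the power `u ^ x` decreases
in `x`, and `Γ` decreases on `(0, 1]`, so the integrand is squeezed between constant-order
integrands with orders `b ∓ L t`; their integrals are
`t ^ (± L t) Γ(b ± L t) / (Γ(1 ± L t) Γ(b ∓ L t))`, which tend to `1` because
`t ^ (L t) → 1`.
-/

open MeasureTheory intervalIntegral Set Filter Topology

theorem Real.continuousOn_Gamma_Ioi : ContinuousOn Real.Gamma (Ioi 0) :=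
  Real.convexOn_Gamma.continuousOn isOpen_Ioi

noncomputable def riemannLiouville (a : ℝ) (φ : ℝ → ℝ) (t : ℝ) : ℝ :=
  (∫ u in (0:ℝ)..t, (t - u) ^ (a - 1) * φ u) / Real.Gamma a

section RiemannLiouville

variable {a b t : ℝ}

theorem integral_sub_rpow_mul_rpow (ha : 0 < a) (hb : 0 < b) (ht : 0 < t) :
    ∫ u in (0:ℝ)..t, (t - u) ^ (a - 1) * u ^ (b - 1) =
      t ^ (a + b - 1) * (Real.Gamma a * Real.Gamma b / Real.Gamma (a + b)) := by
  have h := Complex.betaIntegral_scaled b a ht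
  rw [Complex.betaIntegral_eq_Gamma_mul_div _ _ (by simpa) (by simpa)] at h
  apply Complex.ofReal_injective
  rw [← intervalIntegral.integral_ofReal, add_comm a b, mul_comm (Real.Gamma a)]
  push_cast
  rw [Complex.ofReal_cpow ht.le, ← Complex.Gamma_ofReal, ← Complex.Gamma_ofReal,
    ← Complex.Gamma_ofReal]
  push_cast
  rw [← h]
  refine integral_congr fun u hu => ?_
  rw [uIcc_of_le ht.le] at hu
  simp [Complex.ofReal_cpow (sub_nonneg.2 hu.2), Complex.ofReal_cpow hu.1, mul_comm]

theorem intervalIntegrable_sub_rpow_mul_rpow (ha : 0 < a) (hb : 0 < b) (ht : 0 < t) :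
    IntervalIntegrable (fun u => (t - u) ^ (a - 1) * u ^ (b - 1)) volume 0 t := by
  have hpos : ∀ u ∈ uIcc 0 (t / 2), t - u ≠ 0 := by
    intro u hu
    rw [uIcc_of_le (by linarith)] at hu
    linarith [hu.2]
  have h₁ : IntervalIntegrable (fun u => (t - u) ^ (a - 1) * u ^ (b - 1)) volume 0 (t / 2) :=
    (intervalIntegrable_rpow' (by linarith)).continuousOn_mul
      ((continuousOn_const.sub continuousOn_id).rpow_const fun u hu => Or.inl (hpos u hu))
  have h₂ : IntervalIntegrable (fun u => (t - u) ^ (a - 1) * u ^ (b - 1)) volume (t / 2) t := by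
    have := (intervalIntegrable_rpow' (r := a - 1) (by linarith)).comp_sub_left t
      (a := t / 2) (b := 0)
    rw [sub_zero, sub_half] at this
    refine this.mul_continuousOn (continuousOn_id.rpow_const fun u hu => Or.inl ?_)
    rw [uIcc_of_le (by linarith)] at hu
    exact (by linarith [hu.1] : (0:ℝ) < u).ne'
  exact h₁.trans h₂

theorem intervalIntegrable_sub_rpow_mul_of_abs_le {φ : ℝ → ℝ} {C : ℝ} (ha : 0 < a)
    (hb : 0 < b) (ht : 0 < t) (hφ : AEStronglyMeasurable φ (volume.restrict (Ioc 0 t)))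
    (hle : ∀ u ∈ Ioc 0 t, |φ u| ≤ C * u ^ (b - 1)) :
    IntervalIntegrable (fun u => (t - u) ^ (a - 1) * φ u) volume 0 t := by
  refine ((intervalIntegrable_sub_rpow_mul_rpow ha hb ht).const_mul C).mono_fun' ?_ ?_
  · rw [uIoc_of_le ht.le]
    exact (by fun_prop : Measurable fun u : ℝ => (t - u) ^ (a - 1)).aestronglyMeasurable.mul hφ
  · rw [uIoc_of_le ht.le]
    refine ae_restrict_of_forall_mem measurableSet_Ioc fun u hu => ?_
    have hker : 0 ≤ (t - u) ^ (a - 1) := Real.rpow_nonneg (sub_nonneg.2 hu.2) _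
    dsimp only
    rw [norm_mul, Real.norm_of_nonneg hker, Real.norm_eq_abs, mul_left_comm]
    exact mul_le_mul_of_nonneg_left (hle u hu) hker

theorem riemannLiouville_rpow (ha : 0 < a) (hb : 0 < b) (ht : 0 < t) :
    riemannLiouville a (fun u => u ^ (b - 1)) t =
      t ^ (a + b - 1) * Real.Gamma b / Real.Gamma (a + b) := by
  have := (Real.Gamma_pos_of_pos ha).ne'
  rw [riemannLiouville, integral_sub_rpow_mul_rpow ha hb ht]
  field_simp

theorem riemannLiouville_const_mul (a c : ℝ) (φ : ℝ → ℝ) (t : ℝ) :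
    riemannLiouville a (fun u => c * φ u) t = c * riemannLiouville a φ t := by
  simp only [riemannLiouville, mul_left_comm _ c, intervalIntegral.integral_const_mul,
    mul_div_assoc]

theorem riemannLiouville_mono {φ ψ : ℝ → ℝ} (ha : 0 < a) (ht : 0 ≤ t)
    (hφ : IntervalIntegrable (fun u => (t - u) ^ (a - 1) * φ u) volume 0 t)
    (hψ : IntervalIntegrable (fun u => (t - u) ^ (a - 1) * ψ u) volume 0 t)
    (h : ∀ u ∈ Ioo 0 t, φ u ≤ ψ u) :
    riemannLiouville a φ t ≤ riemannLiouville a ψ t :=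
  div_le_div_of_nonneg_right
    (integral_mono_on_of_le_Ioo ht hφ hψ fun u hu =>
      mul_le_mul_of_nonneg_left (h u hu) (Real.rpow_nonneg (sub_nonneg.2 hu.2.le) _))
    (Real.Gamma_pos_of_pos ha).le

end RiemannLiouville

section PowerLaw

variable {u x b₁ b₂ : ℝ}

theorem inv_Gamma_mul_rpow_le_rpow_div_Gamma (hu : u ∈ Ioc 0 1) (hb₁ : 0 < b₁)
    (hb₂ : b₂ ≤ 1) (hx : x ∈ Icc b₁ b₂) :
    (Real.Gamma b₁)⁻¹ * u ^ (b₂ - 1) ≤ u ^ (x - 1) / Real.Gamma x := by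
  have hx0 : 0 < x := hb₁.trans_le hx.1
  rw [div_eq_inv_mul]
  refine mul_le_mul ?_ (Real.rpow_le_rpow_of_exponent_ge hu.1 hu.2 (by linarith [hx.2]))
    (Real.rpow_nonneg hu.1.le _) (inv_nonneg.2 (Real.Gamma_pos_of_pos hx0).le)
  exact inv_anti₀ (Real.Gamma_pos_of_pos hx0) <| Real.Gamma_strictAntiOn_Ioc.antitoneOn
    ⟨hb₁, by linarith [hx.1, hx.2]⟩ ⟨hx0, hx.2.trans hb₂⟩ hx.1

theorem rpow_div_Gamma_le_inv_Gamma_mul_rpow (hu : u ∈ Ioc 0 1) (hb₁ : 0 < b₁)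
    (hb₂ : b₂ ≤ 1) (hx : x ∈ Icc b₁ b₂) :
    u ^ (x - 1) / Real.Gamma x ≤ (Real.Gamma b₂)⁻¹ * u ^ (b₁ - 1) := by
  have hx0 : 0 < x := hb₁.trans_le hx.1
  have hb₂0 : 0 < b₂ := hx0.trans_le hx.2
  rw [div_eq_inv_mul]
  refine mul_le_mul ?_ (Real.rpow_le_rpow_of_exponent_ge hu.1 hu.2 (by linarith [hx.1]))
    (Real.rpow_nonneg hu.1.le _) (inv_nonneg.2 (Real.Gamma_pos_of_pos hb₂0).le)
  exact inv_anti₀ (Real.Gamma_pos_of_pos hb₂0) <|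
    Real.Gamma_strictAntiOn_Ioc.antitoneOn ⟨hx0, hx.2.trans hb₂⟩ ⟨hb₂0, hb₂⟩ hx.2

end PowerLaw

section VariableOrder

variable {β : ℝ → ℝ} {a b₁ b₂ t : ℝ}

theorem continuousOn_rpow_sub_one_div_Gamma (hβc : ContinuousOn β (Ioc 0 t))
    (hβ : ∀ u ∈ Ioc 0 t, 0 < β u) :
    ContinuousOn (fun u => u ^ (β u - 1) / Real.Gamma (β u)) (Ioc 0 t) :=
  (continuousOn_id.rpow (hβc.sub continuousOn_const) fun _ hu => Or.inl hu.1.ne').div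
    (Real.continuousOn_Gamma_Ioi.comp hβc hβ) fun u hu => (Real.Gamma_pos_of_pos (hβ u hu)).ne'

theorem intervalIntegrable_sub_rpow_mul_rpow_div_Gamma (ha : 0 < a) (hb₁ : 0 < b₁)
    (hb₂ : b₂ ≤ 1) (ht : t ∈ Ioc 0 1) (hβc : ContinuousOn β (Ioc 0 t))
    (hβ : ∀ u ∈ Ioc 0 t, β u ∈ Icc b₁ b₂) :
    IntervalIntegrable (fun u => (t - u) ^ (a - 1) * (u ^ (β u - 1) / Real.Gamma (β u)))
      volume 0 t := by
  have hβ0 : ∀ u ∈ Ioc 0 t, 0 < β u := fun u hu => hb₁.trans_le (hβ u hu).1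
  refine intervalIntegrable_sub_rpow_mul_of_abs_le (C := (Real.Gamma b₂)⁻¹) ha hb₁ ht.1
    ((continuousOn_rpow_sub_one_div_Gamma hβc hβ0).aestronglyMeasurable measurableSet_Ioc)
    fun u hu => ?_
  rw [abs_of_nonneg (div_nonneg (Real.rpow_nonneg hu.1.le _)
    (Real.Gamma_pos_of_pos (hβ0 u hu)).le)]
  exact rpow_div_Gamma_le_inv_Gamma_mul_rpow ⟨hu.1, hu.2.trans ht.2⟩ hb₁ hb₂ (hβ u hu)

theorem riemannLiouville_rpow_div_Gamma_le (ha : 0 < a) (hb₁ : 0 < b₁)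
    (hb₂ : b₂ ≤ 1) (ht : t ∈ Ioc 0 1) (hβc : ContinuousOn β (Ioc 0 t))
    (hβ : ∀ u ∈ Ioc 0 t, β u ∈ Icc b₁ b₂) :
    riemannLiouville a (fun u => u ^ (β u - 1) / Real.Gamma (β u)) t ≤
      (Real.Gamma b₂)⁻¹ * (t ^ (a + b₁ - 1) * Real.Gamma b₁ / Real.Gamma (a + b₁)) := by
  rw [← riemannLiouville_rpow ha hb₁ ht.1, ← riemannLiouville_const_mul]
  refine riemannLiouville_mono ha ht.1.le
    (intervalIntegrable_sub_rpow_mul_rpow_div_Gamma ha hb₁ hb₂ ht hβc hβ) ?_ fun u hu => ?_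
  · simpa only [mul_left_comm] using
      (intervalIntegrable_sub_rpow_mul_rpow ha hb₁ ht.1).const_mul (Real.Gamma b₂)⁻¹
  · exact rpow_div_Gamma_le_inv_Gamma_mul_rpow ⟨hu.1, hu.2.le.trans ht.2⟩ hb₁ hb₂
      (hβ u (Ioo_subset_Ioc_self hu))

theorem le_riemannLiouville_rpow_div_Gamma (ha : 0 < a) (hb₁ : 0 < b₁)
    (hb₂ : b₂ ≤ 1) (ht : t ∈ Ioc 0 1) (hβc : ContinuousOn β (Ioc 0 t))
    (hβ : ∀ u ∈ Ioc 0 t, β u ∈ Icc b₁ b₂) :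
    (Real.Gamma b₁)⁻¹ * (t ^ (a + b₂ - 1) * Real.Gamma b₂ / Real.Gamma (a + b₂)) ≤
      riemannLiouville a (fun u => u ^ (β u - 1) / Real.Gamma (β u)) t := by
  obtain ⟨hb₁t, htb₂⟩ := hβ t ⟨ht.1, le_rfl⟩
  have hb₂0 : 0 < b₂ := hb₁.trans_le (hb₁t.trans htb₂)
  rw [← riemannLiouville_rpow ha hb₂0 ht.1, ← riemannLiouville_const_mul]
  refine riemannLiouville_mono ha ht.1.le ?_
    (intervalIntegrable_sub_rpow_mul_rpow_div_Gamma ha hb₁ hb₂ ht hβc hβ) fun u hu => ?_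
  · simpa only [mul_left_comm] using
      (intervalIntegrable_sub_rpow_mul_rpow ha hb₂0 ht.1).const_mul (Real.Gamma b₁)⁻¹
  · exact inv_Gamma_mul_rpow_le_rpow_div_Gamma ⟨hu.1, hu.2.le.trans ht.2⟩ hb₁ hb₂
      (hβ u (Ioo_subset_Ioc_self hu))

end VariableOrder

theorem tendsto_rpow_mul_self_nhdsGT (L : ℝ) :
    Tendsto (fun t : ℝ => t ^ (L * t)) (𝓝[>] 0) (𝓝 1) := by
  have h : Tendsto (fun t : ℝ => Real.exp (L * (t * Real.log t))) (𝓝[>] 0) (𝓝 1) :=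
    tendsto_nhdsWithin_of_tendsto_nhds <|
      (Real.continuous_exp.comp (continuous_const.mul Real.continuous_mul_log)).tendsto' 0 1
        (by simp)
  refine h.congr' (eventually_nhdsWithin_of_forall fun t (ht : 0 < t) => ?_)
  dsimp only
  rw [Real.rpow_def_of_pos ht, mul_comm (Real.log t), mul_assoc]

theorem tendsto_Gamma_add_mul_nhdsGT {c : ℝ} (hc : 0 < c) (L : ℝ) :
    Tendsto (fun t => Real.Gamma (c + L * t)) (𝓝[>] 0) (𝓝 (Real.Gamma c)) :=
  (Real.continuousOn_Gamma_Ioi.continuousAt (Ioi_mem_nhds hc)).tendsto.comp <|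
    tendsto_nhdsWithin_of_tendsto_nhds <|
      (continuous_const.add (continuous_const_mul L)).tendsto' 0 c (by simp)

theorem tendsto_inv_Gamma_mul_rpow_mul_Gamma_div {a b : ℝ} (hb : 0 < b) (hab : a + b = 1)
    (L : ℝ) :
    Tendsto (fun t => (Real.Gamma (b - L * t))⁻¹ *
      (t ^ (a + (b + L * t) - 1) * Real.Gamma (b + L * t) / Real.Gamma (a + (b + L * t))))
      (𝓝[>] 0) (𝓝 1) := by
  have hΓb := (Real.Gamma_pos_of_pos hb).ne'
  have h := ((tendsto_Gamma_add_mul_nhdsGT hb (-L)).inv₀ hΓb).mul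
    (((tendsto_rpow_mul_self_nhdsGT L).mul (tendsto_Gamma_add_mul_nhdsGT hb L)).div
      (tendsto_Gamma_add_mul_nhdsGT one_pos L) (by simp))
  rw [Real.Gamma_one, one_mul, div_one, inv_mul_cancel₀ hΓb] at h
  simpa only [← add_assoc, hab, add_sub_cancel_left, neg_mul, ← sub_eq_add_neg, Pi.div_apply]
    using h

theorem tendsto_riemannLiouville_rpow_div_Gamma {β : ℝ → ℝ} {a b T L : ℝ} (ha : 0 < a)
    (hb : 0 < b) (hab : a + b = 1) (hT : 0 < T) (hβc : ContinuousOn β (Ioc 0 T))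
    (hβ : ∀ᶠ t in 𝓝[>] 0, ∀ u ∈ Ioc 0 t, |β u - b| ≤ L * t) :
    Tendsto (riemannLiouville a fun u => u ^ (β u - 1) / Real.Gamma (β u)) (𝓝[>] 0)
      (𝓝 1) := by
  have hLt : ∀ᶠ t in 𝓝[>] (0:ℝ), L * t < min a b :=
    tendsto_nhdsWithin_of_tendsto_nhds ((continuous_const_mul L).tendsto' 0 0 (mul_zero L))
      |>.eventually (gt_mem_nhds (lt_min ha hb))
  have hbounds : ∀ᶠ t in 𝓝[>] 0,
      (Real.Gamma (b - L * t))⁻¹ *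
          (t ^ (a + (b + L * t) - 1) * Real.Gamma (b + L * t) / Real.Gamma (a + (b + L * t))) ≤
        riemannLiouville a (fun u => u ^ (β u - 1) / Real.Gamma (β u)) t ∧
      riemannLiouville a (fun u => u ^ (β u - 1) / Real.Gamma (β u)) t ≤
        (Real.Gamma (b + L * t))⁻¹ *
          (t ^ (a + (b - L * t) - 1) * Real.Gamma (b - L * t) / Real.Gamma (a + (b - L * t))) := by
    filter_upwards [hβ, hLt, Ioc_mem_nhdsGT (lt_min hT one_pos)] with t hβt hLtt ht
    have hLa : L * t < a := hLtt.trans_le (min_le_left _ _)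
    have hLb : L * t < b := hLtt.trans_le (min_le_right _ _)
    have ht1 : t ∈ Ioc 0 1 := ⟨ht.1, ht.2.trans (min_le_right _ _)⟩
    have hβc' := hβc.mono (Ioc_subset_Ioc_right (ht.2.trans (min_le_left _ _)))
    have hβt' : ∀ u ∈ Ioc 0 t, β u ∈ Icc (b - L * t) (b + L * t) := fun u hu =>
      ⟨by linarith [(abs_le.1 (hβt u hu)).1], by linarith [(abs_le.1 (hβt u hu)).2]⟩
    exact ⟨le_riemannLiouville_rpow_div_Gamma ha (by linarith) (by linarith) ht1 hβc' hβt',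
      riemannLiouville_rpow_div_Gamma_le ha (by linarith) (by linarith) ht1 hβc' hβt'⟩
  have hup := tendsto_inv_Gamma_mul_rpow_mul_Gamma_div hb hab (-L)
  simp only [neg_mul, sub_neg_eq_add, ← sub_eq_add_neg] at hup
  exact tendsto_of_tendsto_of_tendsto_of_le_of_le'
    (tendsto_inv_Gamma_mul_rpow_mul_Gamma_div hb hab L) hup
    (hbounds.mono fun _ h => h.1) (hbounds.mono fun _ h => h.2)

theorem ContDiffWithinAt.exists_eventually_abs_sub_le_mul {f : ℝ → ℝ} {T : ℝ} (hT : 0 < T)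
    (hf : ContDiffWithinAt ℝ 1 f (Icc 0 T) 0) :
    ∃ L, ∀ᶠ t in 𝓝[>] 0, ∀ s ∈ Icc 0 t, |f s - f 0| ≤ L * t := by
  obtain ⟨K, U, hU, hK⟩ := hf.exists_lipschitzOnWith (convex_Icc 0 T)
  rw [nhdsWithin_Icc_eq_nhdsGE hT, mem_nhdsGE_iff_exists_Icc_subset] at hU
  obtain ⟨r, hr, hrU⟩ := hU
  refine ⟨K, ?_⟩
  filter_upwards [Ioc_mem_nhdsGT hr] with t ht s hs
  have h := hK.dist_le_mul s (hrU ⟨hs.1, hs.2.trans ht.2⟩) 0 (hrU ⟨le_rfl, hr.le⟩)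
  rw [Real.dist_eq, Real.dist_eq, sub_zero, abs_of_nonneg hs.1] at h
  exact h.trans (mul_le_mul_of_nonneg_left hs.2 K.coe_nonneg)

/-- the generalized identity function g tends to 1 as t → 0⁺. -/
theorem g_tendsto_one (T : ℝ) (hT : 0 < T) (α : ℝ → ℝ)
    (hα : ContDiffOn ℝ 1 α (Set.Icc 0 T))
    (hrange : ∀ s ∈ Set.Icc 0 T, α s ∈ Set.Ioo (1:ℝ) 2)
    (α₀ : ℝ) (hα₀ : α₀ = α 0)
    (g : ℝ → ℝ)
    (hg : ∀ s ∈ Set.Ioc 0 T, g s = ∫ u in (0:ℝ)..s,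
      (s - u) ^ (α₀ - 2) / Real.Gamma (α₀ - 1)
        * (u ^ (1 - α u) / Real.Gamma (2 - α u))) :
    Filter.Tendsto g (nhdsWithin 0 (Set.Ioi 0)) (nhds 1) := by
  have h0 : (0:ℝ) ∈ Icc 0 T := ⟨le_rfl, hT.le⟩
  obtain ⟨hα₀1, hα₀2⟩ : α₀ ∈ Ioo 1 2 := hα₀ ▸ hrange 0 h0
  obtain ⟨L, hL⟩ := (hα 0 h0).exists_eventually_abs_sub_le_mul hT
  have hβ : ∀ᶠ t in 𝓝[>] 0, ∀ u ∈ Ioc 0 t, |(2 - α u) - (2 - α₀)| ≤ L * t :=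
    hL.mono fun t ht u hu => by
      rw [sub_sub_sub_cancel_left, abs_sub_comm, hα₀]
      exact ht u (Ioc_subset_Icc_self hu)
  have hlim := tendsto_riemannLiouville_rpow_div_Gamma (β := fun u => 2 - α u) (a := α₀ - 1)
    (by linarith) (by linarith) (by ring) hT
    ((continuousOn_const.sub hα.continuousOn).mono Ioc_subset_Icc_self) hβ
  refine hlim.congr' ?_
  filter_upwards [Ioc_mem_nhdsGT hT] with t ht
  rw [hg t ht, riemannLiouville, ← intervalIntegral.integral_div]
  refine integral_congr fun u _ => ?_
  rw [show α₀ - 1 - 1 = α₀ - 2 by ring, show 2 - α u - 1 = 1 - α u by ring]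
  ring
end

section
/- For any real sequence (v^n)_{n=1}^N and ᾱ ∈ (0,1), the averaged product-integration operator I^n_ᾱ v = λ_{n,1} v^1 + ∑_{j=2}^n λ_{n,j} (v^j + v^{j-1})/2 satisfies the positive-definiteness inequality v^1 · I^1_ᾱ v + ∑_{n=2}^N ((v^n + v^{n-1})/2) · I^n_ᾱ v ≥ 0. -/
open MeasureTheory intervalIntegral

namespace PIop
open Real Set Finset

noncomputable def φ (p : ℝ) (u : ℝ) : ℝ := p * u ^ (p - 1)
noncomputable def gg (p : ℝ) (u : ℝ) : ℝ := p * ((p - 1) * u ^ (p - 2))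
noncomputable def gg' (p : ℝ) (u : ℝ) : ℝ := p * ((p - 1) * ((p - 2) * u ^ (p - 3)))
noncomputable def DD (p : ℝ) (x : ℝ) : ℝ := (x + 2) ^ p - 2 * (x + 1) ^ p + x ^ p

variable {p : ℝ}

lemma phi_cont (hp : 1 < p) : Continuous (φ p) :=
  continuous_const.mul (Real.continuous_rpow_const (by linarith))

lemma diff_pow (hp : 1 < p) (a : ℝ) :
    (a + 1) ^ p - a ^ p = ∫ t in (0:ℝ)..1, φ p (a + t) := by
  rw [intervalIntegral.integral_comp_add_left (φ p) a]
  rw [intervalIntegral.integral_eq_sub_of_hasDerivAt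
    (f := fun x : ℝ => x ^ p) (f' := φ p)
    (fun x _ => Real.hasDerivAt_rpow_const (Or.inr hp.le))
    ((phi_cont hp).intervalIntegrable _ _)]
  norm_num

lemma gg_contOn (hp : 1 < p) {s : Set ℝ} (hs : ∀ x ∈ s, x ≠ 0) :
    ContinuousOn (gg p) s := fun x hx =>
  (ContinuousAt.continuousWithinAt (by
    exact (continuous_const.continuousAt).mul
      ((continuous_const.continuousAt).mul
        (Real.continuousAt_rpow_const x _ (Or.inl (hs x hx))))))

lemma diff_phi (hp : 1 < p) {a : ℝ} (ha : 0 < a) :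
    φ p (a + 1) - φ p a = ∫ s in (0:ℝ)..1, gg p (a + s) := by
  rw [intervalIntegral.integral_comp_add_left (gg p) a]
  rw [intervalIntegral.integral_eq_sub_of_hasDerivAt
    (f := φ p) (f' := gg p)
    (fun x hx => by
      have hx0 : x ≠ 0 := by
        have := hx.1
        rw [min_def] at this
        split_ifs at this <;> nlinarith [hx.1, hx.2]
      exact ((Real.hasDerivAt_rpow_const (p := p - 1) (Or.inl hx0)).const_mul p).congr_deriv
        (by unfold gg; ring_nf)
    )
    ((gg_contOn hp (fun x hx => by
        rcases Set.mem_uIcc.1 hx with h | h <;> nlinarith [h.1, h.2])).intervalIntegrable)]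
  norm_num


lemma gg_contAt {x : ℝ} (hx : x ≠ 0) : ContinuousAt (gg p) x :=
  (continuous_const.continuousAt).mul <| (continuous_const.continuousAt).mul
    (Real.continuousAt_rpow_const x _ (Or.inl hx))

lemma gg'_contAt {x : ℝ} (hx : x ≠ 0) : ContinuousAt (gg' p) x :=
  (continuous_const.continuousAt).mul <| (continuous_const.continuousAt).mul <|
    (continuous_const.continuousAt).mul (Real.continuousAt_rpow_const x _ (Or.inl hx))

lemma mem_uIcc01 {s : ℝ} (hs : s ∈ Set.uIcc (0:ℝ) 1) : 0 ≤ s ∧ s ≤ 1 := by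
  rw [Set.uIcc_of_le (by norm_num : (0:ℝ) ≤ 1)] at hs; exact hs

lemma gg_shift_intable {c : ℝ} (hc : 0 < c) :
    IntervalIntegrable (fun s => gg p (c + s)) volume 0 1 := by
  apply ContinuousOn.intervalIntegrable
  intro s hs
  obtain ⟨h0, h1⟩ := mem_uIcc01 hs
  exact ((gg_contAt (by linarith : c + s ≠ 0)).comp
    ((continuous_const.add continuous_id).continuousAt)).continuousWithinAt

lemma gg'_shift_intable {c : ℝ} (hc : 0 < c) :
    IntervalIntegrable (fun s => gg' p (c + s)) volume 0 1 := by
  apply ContinuousOn.intervalIntegrable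
  intro s hs
  obtain ⟨h0, h1⟩ := mem_uIcc01 hs
  exact ((gg'_contAt (by linarith : c + s ≠ 0)).comp
    ((continuous_const.add continuous_id).continuousAt)).continuousWithinAt

lemma diff_gg (hp : 1 < p) {a : ℝ} (ha : 0 < a) :
    gg p (a + 1) - gg p a = ∫ s in (0:ℝ)..1, gg' p (a + s) := by
  rw [intervalIntegral.integral_comp_add_left (gg' p) a]
  rw [intervalIntegral.integral_eq_sub_of_hasDerivAt
    (f := gg p) (f' := gg' p)
    (fun x hx => by
      have hx' : a + 0 ≤ x ∧ x ≤ a + 1 := by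
        rw [Set.uIcc_of_le (by linarith : a + 0 ≤ a + 1)] at hx; exact hx
      exact (((Real.hasDerivAt_rpow_const (p := p - 2)
          (Or.inl (by intro h; rw[h] at hx'; linarith [hx'.1] : x ≠ 0))).const_mul
        (p - 1)).const_mul p).congr_deriv (by unfold gg'; ring_nf))
    (by
      apply ContinuousOn.intervalIntegrable
      intro x hx
      have hx' : a + 0 ≤ x ∧ x ≤ a + 1 := by
        rw [Set.uIcc_of_le (by linarith : a + 0 ≤ a + 1)] at hx; exact hx
      exact (gg'_contAt (by intro h; rw[h] at hx'; linarith [hx'.1] : x ≠ 0)).continuousWithinAt)]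
  norm_num

lemma gg_anti (hp1 : 1 < p) (hp2 : p < 2) {x y : ℝ} (hx : 0 < x) (hxy : x ≤ y) :
    gg p y ≤ gg p x := by
  have h := Real.rpow_le_rpow_of_nonpos hx hxy (by linarith : p - 2 ≤ 0)
  exact mul_le_mul_of_nonneg_left
    (mul_le_mul_of_nonneg_left h (by linarith)) (by linarith)

lemma gg'_mono (hp1 : 1 < p) (hp2 : p < 2) {x y : ℝ} (hx : 0 < x) (hxy : x ≤ y) :
    gg' p x ≤ gg' p y := by
  have h := Real.rpow_le_rpow_of_nonpos hx hxy (by linarith : p - 3 ≤ 0)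
  exact mul_le_mul_of_nonneg_left (mul_le_mul_of_nonneg_left
    (mul_le_mul_of_nonpos_left h (by linarith)) (by linarith)) (by linarith)

lemma phi_mono (hp1 : 1 < p) {x y : ℝ} (hx : 0 ≤ x) (hxy : x ≤ y) :
    φ p x ≤ φ p y := by
  have h := Real.rpow_le_rpow hx hxy (by linarith : (0:ℝ) ≤ p - 1)
  exact mul_le_mul_of_nonneg_left h (by linarith)

lemma gg_cvx (hp1 : 1 < p) (hp2 : p < 2) {v : ℝ} (hv : 0 < v) :
    2 * gg p (v + 1) ≤ gg p v + gg p (v + 2) := by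
  have h1 := diff_gg hp1 hv
  have h2 := diff_gg hp1 (by linarith : (0:ℝ) < v + 1)
  have key : gg p (v + 1) - gg p v ≤ gg p (v + 1 + 1) - gg p (v + 1) := by
    rw [h1, h2]
    apply intervalIntegral.integral_mono_on (by norm_num)
      (gg'_shift_intable hv) (gg'_shift_intable (by linarith))
    intro s hs
    exact gg'_mono hp1 hp2 (by linarith [hs.1] : (0:ℝ) < v + s) (by linarith)
  have hv2 : v + 1 + 1 = v + 2 := by ring
  rw [hv2] at key
  linarith


/-- second difference of φ at u, u+1, u+2 is nonpositive-increasing: concavity-type -/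
lemma phi_diff_anti (hp1 : 1 < p) (hp2 : p < 2) {u : ℝ} (hu : 0 < u) :
    φ p (u + 2) - φ p (u + 1) ≤ φ p (u + 1) - φ p u := by
  have h1 := diff_phi hp1 hu
  have h2 := diff_phi hp1 (by linarith : (0:ℝ) < u + 1)
  have e : u + 1 + 1 = u + 2 := by ring
  rw [e] at h2
  rw [h1, h2]
  apply intervalIntegral.integral_mono_on (by norm_num)
    (gg_shift_intable (by linarith)) (gg_shift_intable hu)
  intro s hs
  exact gg_anti hp1 hp2 (by linarith [hs.1]) (by linarith)

lemma phi_diff_cvx (hp1 : 1 < p) (hp2 : p < 2) {u : ℝ} (hu : 0 < u) :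
    2 * (φ p (u + 2) - φ p (u + 1)) ≤
      (φ p (u + 1) - φ p u) + (φ p (u + 3) - φ p (u + 2)) := by
  have h1 := diff_phi hp1 hu
  have h2 := diff_phi hp1 (by linarith : (0:ℝ) < u + 1)
  have h3 := diff_phi hp1 (by linarith : (0:ℝ) < u + 2)
  have e2 : u + 1 + 1 = u + 2 := by ring
  have e3 : u + 2 + 1 = u + 3 := by ring
  rw [e2] at h2; rw [e3] at h3
  rw [h1, h2, h3]
  rw [← intervalIntegral.integral_const_mul,
    ← intervalIntegral.integral_add (gg_shift_intable hu)
      (gg_shift_intable (by linarith : (0:ℝ) < u + 2))]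
  apply intervalIntegral.integral_mono_on (by norm_num)
    (((gg_shift_intable (by linarith : (0:ℝ) < u+1)).const_mul 2))
    ((gg_shift_intable hu).add (gg_shift_intable (by linarith : (0:ℝ) < u + 2)))
  intro s hs
  have := gg_cvx hp1 hp2 (v := u + s) (by linarith [hs.1])
  have e4 : u + s + 1 = u + 1 + s := by ring
  have e5 : u + s + 2 = u + 2 + s := by ring
  rw [e4, e5] at this
  exact this

lemma phi_shift_intable (hp1 : 1 < p) (c : ℝ) :
    IntervalIntegrable (fun t => φ p (c + t)) volume 0 1 :=
  (((phi_cont hp1).comp (continuous_const.add continuous_id))).intervalIntegrable _ _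

lemma DD_rep (hp : 1 < p) (x : ℝ) :
    DD p x = ∫ t in (0:ℝ)..1, (φ p (x + 1 + t) - φ p (x + t)) := by
  have h1 := diff_pow hp x
  have h2 := diff_pow hp (x + 1)
  have e : x + 1 + 1 = x + 2 := by ring
  rw [e] at h2
  rw [intervalIntegral.integral_sub (phi_shift_intable hp (x+1)) (phi_shift_intable hp x),
    ← h1, ← h2]
  unfold DD; ring

lemma ae_ne_zero : ∀ᵐ (t : ℝ) ∂(volume : Measure ℝ), t ≠ 0 := by
  refine ae_iff.2 ?_
  simpa using measure_singleton (0 : ℝ)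

lemma DD_nonneg (hp1 : 1 < p) {x : ℝ} (hx : 0 ≤ x) : 0 ≤ DD p x := by
  rw [DD_rep hp1 x]
  apply intervalIntegral.integral_nonneg (by norm_num)
  intro t ht
  have := phi_mono hp1 (x := x + t) (y := x + 1 + t) (by linarith [ht.1]) (by linarith)
  linarith

lemma DD_anti (hp1 : 1 < p) (hp2 : p < 2) {x : ℝ} (hx : 0 ≤ x) :
    DD p (x + 1) ≤ DD p x := by
  rw [DD_rep hp1 x, DD_rep hp1 (x + 1)]
  apply intervalIntegral.integral_mono_ae_restrict (by norm_num)
    ((phi_shift_intable hp1 _).sub (phi_shift_intable hp1 _))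
    ((phi_shift_intable hp1 _).sub (phi_shift_intable hp1 _))
  refine (ae_restrict_iff' measurableSet_Icc).2 (ae_ne_zero.mono fun t ht hmem => ?_)
  have ht0 : 0 < t := lt_of_le_of_ne hmem.1 (Ne.symm ht)
  have := phi_diff_anti hp1 hp2 (u := x + t) (by linarith)
  have e1 : x + t + 1 = x + 1 + t := by ring
  have e2 : x + t + 2 = x + 1 + 1 + t := by ring
  rw [e1, e2] at this
  exact this

lemma DD_cvx (hp1 : 1 < p) (hp2 : p < 2) {x : ℝ} (hx : 0 ≤ x) :
    2 * DD p (x + 1) ≤ DD p x + DD p (x + 2) := by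
  rw [DD_rep hp1 x, DD_rep hp1 (x + 1), DD_rep hp1 (x + 2)]
  rw [← intervalIntegral.integral_const_mul,
    ← intervalIntegral.integral_add
      ((phi_shift_intable hp1 _).sub (phi_shift_intable hp1 _))
      ((phi_shift_intable hp1 _).sub (phi_shift_intable hp1 _))]
  apply intervalIntegral.integral_mono_ae_restrict (by norm_num)
    (((phi_shift_intable hp1 _).sub (phi_shift_intable hp1 _)).const_mul 2)
    (((phi_shift_intable hp1 _).sub (phi_shift_intable hp1 _)).add
      (((phi_shift_intable hp1 _).sub (phi_shift_intable hp1 _))))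
  refine (ae_restrict_iff' measurableSet_Icc).2 (ae_ne_zero.mono fun t ht hmem => ?_)
  have ht0 : 0 < t := lt_of_le_of_ne hmem.1 (Ne.symm ht)
  have := phi_diff_cvx hp1 hp2 (u := x + t) (by linarith)
  have e1 : x + t + 1 = x + 1 + t := by ring
  have e2 : x + t + 2 = x + 1 + 1 + t := by ring
  have e3 : x + t + 3 = x + 2 + 1 + t := by ring
  rw [e1, e2, e3] at this
  simp only [show x + 2 + t = x + 1 + 1 + t from by ring]
  linarith


noncomputable def G (q : ℝ) : ℝ := 3 ^ q + 7 - 4 * 2 ^ q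

lemma G_hasDeriv (q : ℝ) :
    HasDerivAt G (3 ^ q * log 3 - 4 * (2 ^ q * log 2)) q := by
  have h3 := (Real.hasStrictDerivAt_const_rpow (by norm_num : (0:ℝ) < 3) q).hasDerivAt
  have h2 := (Real.hasStrictDerivAt_const_rpow (by norm_num : (0:ℝ) < 2) q).hasDerivAt
  exact (h3.add_const 7).sub (h2.const_mul 4)

lemma nine_log_three : 9 * log 3 ≤ 16 * log 2 := by
  have h1 : log ((3:ℝ) ^ (9:ℕ)) = 9 * log 3 := by rw [Real.log_pow]; norm_num
  have h2 : log ((2:ℝ) ^ (16:ℕ)) = 16 * log 2 := by rw [Real.log_pow]; norm_num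
  rw [← h1, ← h2]
  apply Real.log_le_log (by norm_num)
  norm_num

lemma G_deriv_nonpos {q : ℝ} (hq : q ∈ Set.Ioo (1:ℝ) 2) : deriv G q ≤ 0 := by
  rw [(G_hasDeriv q).deriv]
  have h32 : (3:ℝ) ^ q ≤ 9/4 * 2 ^ q := by
    have hm : (3:ℝ) ^ q = 2 ^ q * (3/2) ^ q := by
      rw [← Real.mul_rpow (by norm_num) (by norm_num)]; norm_num
    have hle : ((3:ℝ)/2) ^ q ≤ (3/2) ^ (2:ℝ) :=
      Real.rpow_le_rpow_of_exponent_le (by norm_num) hq.2.le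
    have h94 : ((3:ℝ)/2) ^ (2:ℝ) = 9/4 := by
      rw [show (2:ℝ) = ((2:ℕ):ℝ) by norm_num, Real.rpow_natCast]; norm_num
    have h2q : (0:ℝ) < 2 ^ q := Real.rpow_pos_of_pos (by norm_num) q
    nlinarith
  have hlog3 : (0:ℝ) ≤ log 3 := Real.log_nonneg (by norm_num)
  have h2q : (0:ℝ) < 2 ^ q := Real.rpow_pos_of_pos (by norm_num) q
  nlinarith [nine_log_three]

lemma numeric_ineq {q : ℝ} (h1 : 1 ≤ q) (h2 : q ≤ 2) : 4 * (2:ℝ) ^ q ≤ 3 ^ q + 7 := by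
  have hanti : AntitoneOn G (Set.Icc 1 2) := by
    apply antitoneOn_of_deriv_nonpos (convex_Icc 1 2)
    · exact fun x _ => (G_hasDeriv x).continuousAt.continuousWithinAt
    · intro x hx
      exact (G_hasDeriv x).differentiableAt.differentiableWithinAt
    · intro x hx
      rw [interior_Icc] at hx
      exact G_deriv_nonpos hx
  have hG2 : G 2 = 0 := by
    unfold G
    rw [show (2:ℝ) = ((2:ℕ):ℝ) by norm_num, Real.rpow_natCast, Real.rpow_natCast]
    norm_num
  have := hanti ⟨h1, h2⟩ ⟨by norm_num, le_refl 2⟩ h2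
  rw [hG2] at this
  unfold G at this
  linarith


noncomputable def Aseq (p : ℝ) : ℕ → ℝ
  | 0 => 2
  | (k+1) => DD p k

noncomputable def cc (p : ℝ) (m : ℕ) : ℝ := Aseq p m - 2 * Aseq p (m+1) + Aseq p (m+2)
noncomputable def BB (p : ℝ) (m : ℕ) : ℝ := Aseq p m - Aseq p (m+1)

lemma Aseq_succ (k : ℕ) : Aseq p (k+1) = DD p k := rfl

lemma Aseq_nonneg (hp1 : 1 < p) (m : ℕ) : 0 ≤ Aseq p m := by
  cases m with
  | zero => norm_num [Aseq]
  | succ k => exact DD_nonneg hp1 (Nat.cast_nonneg k)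

lemma BB_nonneg (hp1 : 1 < p) (hp2 : p < 2) {m : ℕ} (hm : 1 ≤ m) : 0 ≤ BB p m := by
  obtain ⟨k, rfl⟩ : ∃ k, m = k + 1 := ⟨m - 1, by omega⟩
  unfold BB
  rw [Aseq_succ, Aseq_succ]
  have := DD_anti hp1 hp2 (x := (k:ℝ)) (Nat.cast_nonneg k)
  push_cast
  linarith

lemma cc_nonneg (hp1 : 1 < p) (hp2 : p < 2) (m : ℕ) : 0 ≤ cc p m := by
  cases m with
  | zero =>
    have h0 : Aseq p 0 = 2 := rfl
    have h1 : Aseq p 1 = DD p ((0:ℕ):ℝ) := Aseq_succ 0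
    have h2 : Aseq p 2 = DD p ((1:ℕ):ℝ) := Aseq_succ 1
    unfold cc
    rw [h0, h1, h2]
    unfold DD
    push_cast
    rw [Real.zero_rpow (by linarith), Real.one_rpow]
    norm_num
    have := numeric_ineq hp1.le hp2.le
    linarith
  | succ k =>
    unfold cc
    rw [Aseq_succ, Aseq_succ, Aseq_succ]
    have := DD_cvx hp1 hp2 (x := (k:ℝ)) (Nat.cast_nonneg k)
    push_cast
    linarith

lemma decomposition (k M : ℕ) (hkM : k ≤ M) :
    Aseq p k = (∑ m ∈ Finset.Icc k M, ((m + 1 - k : ℕ) : ℝ) * cc p m)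
      + Aseq p (M+1) + ((M + 1 - k : ℕ) : ℝ) * BB p (M+1) := by
  induction M, hkM using Nat.le_induction with
  | base =>
    rw [Finset.Icc_self, Finset.sum_singleton]
    have e1 : (k + 1 - k : ℕ) = 1 := by omega
    rw [e1]
    unfold cc BB
    push_cast
    ring
  | succ M hkM ih =>
    rw [Finset.sum_Icc_succ_top (by omega : k ≤ M + 1)]
    have e1 : ((M + 1 + 1 - k : ℕ) : ℝ) = (M:ℝ) + 2 - k := by
      rw [Nat.cast_sub (by omega)]; push_cast; ring
    have e2 : ((M + 1 - k : ℕ) : ℝ) = (M:ℝ) + 1 - k := by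
      rw [Nat.cast_sub (by omega)]; push_cast; ring
    rw [ih, e1, e2]
    unfold cc BB
    ring

/-- number of windows of length m+1 containing both n and j -/
lemma window_card (m N n j : ℕ) (hn : n ∈ Finset.Icc 1 N) (hj : j ∈ Finset.Icc 1 N) :
    (((Finset.Icc 1 (N+m)).filter
        (fun q => (n ≤ q ∧ q ≤ n + m) ∧ (j ≤ q ∧ q ≤ j + m))).card : ℝ)
      = ((min n j + m + 1 - max n j : ℕ) : ℝ) := by
  simp only [Finset.mem_Icc] at hn hj
  congr 1
  have : (Finset.Icc 1 (N+m)).filter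
        (fun q => (n ≤ q ∧ q ≤ n + m) ∧ (j ≤ q ∧ q ≤ j + m))
      = Finset.Icc (max n j) (min n j + m) := by
    ext q
    simp only [Finset.mem_filter, Finset.mem_Icc]
    omega
  rw [this, Nat.card_Icc]

lemma kernel_psd (m N : ℕ) (w : ℕ → ℝ) :
    0 ≤ ∑ n ∈ Finset.Icc 1 N, ∑ j ∈ Finset.Icc 1 N,
      ((min n j + m + 1 - max n j : ℕ) : ℝ) * (w n * w j) := by
  have key : ∑ n ∈ Finset.Icc 1 N, ∑ j ∈ Finset.Icc 1 N,
      ((min n j + m + 1 - max n j : ℕ) : ℝ) * (w n * w j)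
      = ∑ q ∈ Finset.Icc 1 (N+m),
          (∑ n ∈ Finset.Icc 1 N, if n ≤ q ∧ q ≤ n + m then w n else 0)^2 := by
    have expand : ∀ q, (∑ n ∈ Finset.Icc 1 N, if n ≤ q ∧ q ≤ n + m then w n else 0)^2
        = ∑ n ∈ Finset.Icc 1 N, ∑ j ∈ Finset.Icc 1 N,
            (if (n ≤ q ∧ q ≤ n + m) ∧ (j ≤ q ∧ q ≤ j + m) then w n * w j else 0) := by
      intro q
      rw [sq, Finset.sum_mul_sum]
      refine Finset.sum_congr rfl fun n _ => Finset.sum_congr rfl fun j _ => ?_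
      by_cases h1 : n ≤ q ∧ q ≤ n + m <;> by_cases h2 : j ≤ q ∧ q ≤ j + m <;>
        simp [h1, h2]
    calc ∑ n ∈ Finset.Icc 1 N, ∑ j ∈ Finset.Icc 1 N,
          ((min n j + m + 1 - max n j : ℕ) : ℝ) * (w n * w j)
        = ∑ n ∈ Finset.Icc 1 N, ∑ j ∈ Finset.Icc 1 N, ∑ q ∈ Finset.Icc 1 (N+m),
            (if (n ≤ q ∧ q ≤ n + m) ∧ (j ≤ q ∧ q ≤ j + m) then w n * w j else 0) := by
          refine Finset.sum_congr rfl fun n hn => Finset.sum_congr rfl fun j hj => ?_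
          rw [← window_card m N n j hn hj, ← Finset.sum_filter, Finset.sum_const,
            nsmul_eq_mul]
      _ = ∑ n ∈ Finset.Icc 1 N, ∑ q ∈ Finset.Icc 1 (N+m), ∑ j ∈ Finset.Icc 1 N,
            (if (n ≤ q ∧ q ≤ n + m) ∧ (j ≤ q ∧ q ≤ j + m) then w n * w j else 0) := by
          exact Finset.sum_congr rfl fun n _ => Finset.sum_comm
      _ = ∑ q ∈ Finset.Icc 1 (N+m), ∑ n ∈ Finset.Icc 1 N, ∑ j ∈ Finset.Icc 1 N,
            (if (n ≤ q ∧ q ≤ n + m) ∧ (j ≤ q ∧ q ≤ j + m) then w n * w j else 0) :=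
          Finset.sum_comm
      _ = ∑ q ∈ Finset.Icc 1 (N+m),
          (∑ n ∈ Finset.Icc 1 N, if n ≤ q ∧ q ≤ n + m then w n else 0)^2 := by
          simp_rw [expand]
  rw [key]
  exact Finset.sum_nonneg fun q _ => sq_nonneg _


variable {p' : ℝ}

lemma pair_decomp {n j M : ℕ} (hn1 : 1 ≤ n) (hnM : n ≤ M) (hj1 : 1 ≤ j) (hjM : j ≤ M) :
    Aseq p (max n j - min n j)
      = (∑ m ∈ Finset.range (M+1), ((min n j + m + 1 - max n j : ℕ) : ℝ) * cc p m)
        + Aseq p (M+1) + ((min n j + M + 1 - max n j : ℕ) : ℝ) * BB p (M+1) := by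
  have hmm : min n j ≤ max n j := min_le_max
  have hmaxM : max n j ≤ M := max_le hnM hjM
  rw [decomposition (max n j - min n j) M (by omega)]
  congr 1
  · congr 1
    calc ∑ m ∈ Finset.Icc (max n j - min n j) M,
          ((m + 1 - (max n j - min n j) : ℕ) : ℝ) * cc p m
        = ∑ m ∈ Finset.Icc (max n j - min n j) M,
            ((min n j + m + 1 - max n j : ℕ) : ℝ) * cc p m := by
          refine Finset.sum_congr rfl fun m hm => ?_
          simp only [Finset.mem_Icc] at hm
          congr 2
          omega
      _ = ∑ m ∈ Finset.range (M+1), ((min n j + m + 1 - max n j : ℕ) : ℝ) * cc p m := by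
          apply Finset.sum_subset
          · intro m hm
            simp only [Finset.mem_Icc] at hm
            simp only [Finset.mem_range]
            omega
          · intro m hm hnot
            simp only [Finset.mem_range] at hm
            simp only [Finset.mem_Icc] at hnot
            have : (min n j + m + 1 - max n j : ℕ) = 0 := by omega
            rw [this]
            norm_num
  · congr 2
    omega

lemma square_nonneg (hp1 : 1 < p) (hp2 : p < 2) (N : ℕ) (w : ℕ → ℝ) :
    0 ≤ ∑ n ∈ Finset.Icc 1 N, ∑ j ∈ Finset.Icc 1 N,
      Aseq p (max n j - min n j) * (w n * w j) := by
  have pd : ∀ n ∈ Finset.Icc 1 N, ∀ j ∈ Finset.Icc 1 N,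
      Aseq p (max n j - min n j) * (w n * w j)
        = (∑ m ∈ Finset.range (N+1),
            cc p m * (((min n j + m + 1 - max n j : ℕ):ℝ) * (w n * w j)))
          + Aseq p (N+1) * (w n * w j)
          + BB p (N+1) * (((min n j + N + 1 - max n j : ℕ):ℝ) * (w n * w j)) := by
    intro n hn j hj
    simp only [Finset.mem_Icc] at hn hj
    rw [pair_decomp hn.1 hn.2 hj.1 hj.2, add_mul, add_mul, Finset.sum_mul]
    congr 1
    · congr 1
      exact Finset.sum_congr rfl fun m _ => by ring
    · ring
  rw [Finset.sum_congr rfl (fun n hn => Finset.sum_congr rfl (fun j hj => pd n hn j hj))]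
  simp only [Finset.sum_add_distrib]
  have h1 : 0 ≤ ∑ n ∈ Finset.Icc 1 N, ∑ j ∈ Finset.Icc 1 N,
      ∑ m ∈ Finset.range (N+1),
        cc p m * (((min n j + m + 1 - max n j : ℕ):ℝ) * (w n * w j)) := by
    have sw : ∑ n ∈ Finset.Icc 1 N, ∑ j ∈ Finset.Icc 1 N, ∑ m ∈ Finset.range (N+1),
        cc p m * (((min n j + m + 1 - max n j : ℕ):ℝ) * (w n * w j))
        = ∑ m ∈ Finset.range (N+1), ∑ n ∈ Finset.Icc 1 N, ∑ j ∈ Finset.Icc 1 N,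
            cc p m * (((min n j + m + 1 - max n j : ℕ):ℝ) * (w n * w j)) := by
      calc ∑ n ∈ Finset.Icc 1 N, ∑ j ∈ Finset.Icc 1 N, ∑ m ∈ Finset.range (N+1),
            cc p m * (((min n j + m + 1 - max n j : ℕ):ℝ) * (w n * w j))
          = ∑ n ∈ Finset.Icc 1 N, ∑ m ∈ Finset.range (N+1), ∑ j ∈ Finset.Icc 1 N,
            cc p m * (((min n j + m + 1 - max n j : ℕ):ℝ) * (w n * w j)) :=
            Finset.sum_congr rfl fun n _ => Finset.sum_comm
        _ = ∑ m ∈ Finset.range (N+1), ∑ n ∈ Finset.Icc 1 N, ∑ j ∈ Finset.Icc 1 N,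
            cc p m * (((min n j + m + 1 - max n j : ℕ):ℝ) * (w n * w j)) :=
            Finset.sum_comm
    rw [sw]
    refine Finset.sum_nonneg fun m _ => ?_
    simp_rw [← Finset.mul_sum]
    exact mul_nonneg (cc_nonneg hp1 hp2 m) (kernel_psd m N w)
  have h2 : 0 ≤ ∑ n ∈ Finset.Icc 1 N, ∑ j ∈ Finset.Icc 1 N,
      Aseq p (N+1) * (w n * w j) := by
    simp_rw [← Finset.mul_sum]
    refine mul_nonneg (Aseq_nonneg hp1 _) ?_
    rw [← Finset.sum_mul]
    exact mul_self_nonneg _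
  have h3 : 0 ≤ ∑ n ∈ Finset.Icc 1 N, ∑ j ∈ Finset.Icc 1 N,
      BB p (N+1) * (((min n j + N + 1 - max n j : ℕ):ℝ) * (w n * w j)) := by
    simp_rw [← Finset.mul_sum]
    exact mul_nonneg (BB_nonneg hp1 hp2 (by omega)) (kernel_psd N N w)
  linarith

lemma Icc1 (k : ℕ) : Finset.Icc 1 k = Finset.Ioc 0 k := by
  ext q; simp only [Finset.mem_Icc, Finset.mem_Ioc]; omega

lemma swap_tri (N : ℕ) (f : ℕ → ℕ → ℝ) :
    ∑ n ∈ Finset.Icc 1 N, ∑ j ∈ Finset.Ioc n N, f n j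
      = ∑ n ∈ Finset.Icc 1 N, ∑ j ∈ Finset.Ico 1 n, f j n := by
  rw [Finset.sum_sigma', Finset.sum_sigma']
  refine Finset.sum_nbij' (fun x => ⟨x.2, x.1⟩) (fun x => ⟨x.2, x.1⟩) ?_ ?_
    (fun _ _ => rfl) (fun _ _ => rfl) (fun _ _ => rfl) <;>
    simp only [Finset.mem_Icc, Finset.mem_Ioc, Finset.mem_Ico, Sigma.forall,
      Finset.mem_sigma] <;>
    (rintro a b ⟨⟨h1, h2⟩, h3, h4⟩; omega)

theorem triangle_nonneg (hp1 : 1 < p) (hp2 : p < 2) (N : ℕ) (w : ℕ → ℝ) :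
    0 ≤ ∑ n ∈ Finset.Icc 1 N, ∑ j ∈ Finset.Icc 1 n,
        (if n - j = 0 then 1 else Aseq p (n - j)) * (w n * w j) := by
  have sq := square_nonneg hp1 hp2 N w
  have key : ∑ n ∈ Finset.Icc 1 N, ∑ j ∈ Finset.Icc 1 N,
      Aseq p (max n j - min n j) * (w n * w j)
      = 2 * ∑ n ∈ Finset.Icc 1 N, ∑ j ∈ Finset.Icc 1 n,
          (if n - j = 0 then 1 else Aseq p (n - j)) * (w n * w j) := by
    calc ∑ n ∈ Finset.Icc 1 N, ∑ j ∈ Finset.Icc 1 N,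
          Aseq p (max n j - min n j) * (w n * w j)
        = ∑ n ∈ Finset.Icc 1 N,
            ((∑ j ∈ Finset.Icc 1 n, Aseq p (max n j - min n j) * (w n * w j))
              + ∑ j ∈ Finset.Ioc n N, Aseq p (max n j - min n j) * (w n * w j)) := by
          refine Finset.sum_congr rfl fun n hn => ?_
          simp only [Finset.mem_Icc] at hn
          rw [Icc1, Icc1, ← Finset.sum_Ioc_consecutive _ (Nat.zero_le n) hn.2]
      _ = (∑ n ∈ Finset.Icc 1 N, ∑ j ∈ Finset.Icc 1 n,
            Aseq p (max n j - min n j) * (w n * w j))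
          + ∑ n ∈ Finset.Icc 1 N, ∑ j ∈ Finset.Ioc n N,
            Aseq p (max n j - min n j) * (w n * w j) := Finset.sum_add_distrib
      _ = (∑ n ∈ Finset.Icc 1 N, ∑ j ∈ Finset.Icc 1 n,
            Aseq p (max n j - min n j) * (w n * w j))
          + ∑ n ∈ Finset.Icc 1 N, ∑ j ∈ Finset.Ico 1 n,
            Aseq p (max n j - min n j) * (w n * w j) := by
          rw [swap_tri N (fun n j => Aseq p (max n j - min n j) * (w n * w j))]
          congr 1
          refine Finset.sum_congr rfl fun n _ => Finset.sum_congr rfl fun j _ => ?_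
          rw [max_comm, min_comm]
          ring
      _ = 2 * ∑ n ∈ Finset.Icc 1 N, ∑ j ∈ Finset.Icc 1 n,
          (if n - j = 0 then 1 else Aseq p (n - j)) * (w n * w j) := by
          conv_lhs => rw [← Finset.sum_add_distrib]
          conv_rhs => rw [two_mul, ← Finset.sum_add_distrib]
          refine Finset.sum_congr rfl fun n hn => ?_
          simp only [Finset.mem_Icc] at hn
          have hIcc : Finset.Icc 1 n = Finset.Ico 1 (n + 1) := (Finset.Ico_add_one_right_eq_Icc 1 n).symm
          have top1 : ∑ j ∈ Finset.Icc 1 n, Aseq p (max n j - min n j) * (w n * w j)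
              = (∑ j ∈ Finset.Ico 1 n, Aseq p (max n j - min n j) * (w n * w j))
                + Aseq p (max n n - min n n) * (w n * w n) := by
            rw [hIcc, Finset.sum_Ico_succ_top hn.1]
          have top2 : ∑ j ∈ Finset.Icc 1 n,
              (if n - j = 0 then 1 else Aseq p (n - j)) * (w n * w j)
              = (∑ j ∈ Finset.Ico 1 n,
                  (if n - j = 0 then 1 else Aseq p (n - j)) * (w n * w j))
                + (if n - n = 0 then 1 else Aseq p (n - n)) * (w n * w n) := by
            rw [hIcc, Finset.sum_Ico_succ_top hn.1]
          have off : ∀ j ∈ Finset.Ico 1 n,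
              Aseq p (max n j - min n j) * (w n * w j)
                = (if n - j = 0 then 1 else Aseq p (n - j)) * (w n * w j) := by
            intro j hj
            simp only [Finset.mem_Ico] at hj
            rw [if_neg (by omega)]
            have e : max n j - min n j = n - j := by omega
            rw [e]
          rw [top1, top2, Finset.sum_congr rfl off]
          have ediag : max n n - min n n = 0 := by omega
          rw [ediag, if_pos (by omega)]
          have hA0 : Aseq p 0 = 2 := rfl
          rw [hA0]
          ring
  linarith


lemma lam_formula (ᾱ τ : ℝ) (hᾱ : ᾱ ∈ Set.Ioo (0:ℝ) 1) (hτ : 0 < τ)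
    (t : ℕ → ℝ) (ht : ∀ j, t j = j * τ)
    (lam : ℕ → ℕ → ℝ)
    (hlam : ∀ n j, 1 ≤ j → j ≤ n →
      lam n j = (1/τ) * ∫ s in (t (n-1))..(t n),
        ∫ u in (t (j-1))..(min s (t j)), (s - u) ^ (ᾱ - 1) / Real.Gamma ᾱ)
    {n j : ℕ} (hj1 : 1 ≤ j) (hjn : j ≤ n) :
    lam n j = (τ ^ ᾱ / (ᾱ * (ᾱ + 1) * Real.Gamma ᾱ))
      * (if n - j = 0 then 1 else Aseq (ᾱ + 1) (n - j)) := by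
  obtain ⟨hα0, hα1⟩ := hᾱ
  have hΓ : 0 < Real.Gamma ᾱ := Real.Gamma_pos_of_pos hα0
  have hq : (-1:ℝ) < ᾱ - 1 := by linarith
  have hq1 : ᾱ - 1 + 1 = ᾱ := by ring
  have hn1 : 1 ≤ n := le_trans hj1 hjn
  have htn : t n = (n:ℝ) * τ := ht n
  have htn1 : t (n-1) = ((n:ℝ) - 1) * τ := by
    rw [ht]; congr 1; rw [Nat.cast_sub hn1]; norm_num
  have htj : t j = (j:ℝ) * τ := ht j
  have htj1 : t (j-1) = ((j:ℝ) - 1) * τ := by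
    rw [ht]; congr 1; rw [Nat.cast_sub hj1]; norm_num
  have hn1R : (1:ℝ) ≤ (n:ℝ) := by exact_mod_cast hn1
  have hj1R : (1:ℝ) ≤ (j:ℝ) := by exact_mod_cast hj1
  have hcd : t (n-1) ≤ t n := by rw [htn, htn1]; nlinarith
  rw [hlam n j hj1 hjn]
  rcases eq_or_lt_of_le hjn with rfl | hlt
  · -- j = n : diagonal case
    rw [if_pos (by omega)]
    have inner : ∀ s ∈ Set.uIcc (t (j-1)) (t j),
        (∫ u in (t (j-1))..(min s (t j)), (s - u) ^ (ᾱ - 1) / Real.Gamma ᾱ)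
          = (s - t (j-1)) ^ ᾱ / (ᾱ * Real.Gamma ᾱ) := by
      intro s hs
      rw [Set.uIcc_of_le (by rw [htj, htj1]; nlinarith)] at hs
      rw [min_eq_left hs.2]
      rw [intervalIntegral.integral_div]
      rw [intervalIntegral.integral_comp_sub_left (fun x => x ^ (ᾱ - 1)) s]
      rw [sub_self]
      rw [integral_rpow (Or.inl hq), hq1]
      rw [Real.zero_rpow hα0.ne']
      rw [sub_zero, div_div]
    rw [intervalIntegral.integral_congr inner]
    have pull : (fun s => (s - t (j-1)) ^ ᾱ / (ᾱ * Real.Gamma ᾱ))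
        = fun s => ((fun x => x ^ ᾱ) (s - t (j-1))) / (ᾱ * Real.Gamma ᾱ) := rfl
    rw [pull, intervalIntegral.integral_div,
      intervalIntegral.integral_comp_sub_right (fun x => x ^ ᾱ) (t (j-1)),
      sub_self, integral_rpow (Or.inl (by linarith : (-1:ℝ) < ᾱ)),
      Real.zero_rpow (by linarith : ᾱ + 1 ≠ 0), sub_zero]
    have hdc : t j - t (j-1) = τ := by rw [htj, htj1]; ring
    rw [hdc]
    rw [Real.rpow_add_one hτ.ne' ᾱ, mul_one]
    field_simp
  · -- j < n : off-diagonal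
    have hk1 : 1 ≤ n - j := by omega
    rw [if_neg (by omega)]
    have hbc : t j ≤ t (n-1) := by
      rw [htj, htn1]
      have : (j:ℝ) ≤ (n:ℝ) - 1 := by
        have : (j:ℝ) + 1 ≤ (n:ℝ) := by exact_mod_cast hlt
        linarith
      nlinarith
    have inner : ∀ s ∈ Set.uIcc (t (n-1)) (t n),
        (∫ u in (t (j-1))..(min s (t j)), (s - u) ^ (ᾱ - 1) / Real.Gamma ᾱ)
          = ((s - t (j-1)) ^ ᾱ - (s - t j) ^ ᾱ) / (ᾱ * Real.Gamma ᾱ) := by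
      intro s hs
      rw [Set.uIcc_of_le hcd] at hs
      rw [min_eq_right (le_trans hbc hs.1)]
      rw [intervalIntegral.integral_div]
      rw [intervalIntegral.integral_comp_sub_left (fun x => x ^ (ᾱ - 1)) s]
      rw [integral_rpow (Or.inl hq), hq1, div_div]
    rw [intervalIntegral.integral_congr inner]
    have hcont : ∀ e : ℝ, IntervalIntegrable (fun s => (s - e) ^ ᾱ)
        volume (t (n-1)) (t n) := by
      intro e
      exact ((Real.continuous_rpow_const hα0.le).comp
        (continuous_id.sub continuous_const)).intervalIntegrable _ _
    have splitdiv : (fun s => ((s - t (j-1)) ^ ᾱ - (s - t j) ^ ᾱ) / (ᾱ * Real.Gamma ᾱ))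
        = fun s => ((s - t (j-1)) ^ ᾱ - (s - t j) ^ ᾱ) / (ᾱ * Real.Gamma ᾱ) := rfl
    rw [intervalIntegral.integral_div, intervalIntegral.integral_sub (hcont _) (hcont _)]
    rw [intervalIntegral.integral_comp_sub_right (fun x => x ^ ᾱ) (t (j-1)),
      intervalIntegral.integral_comp_sub_right (fun x => x ^ ᾱ) (t j),
      integral_rpow (Or.inl (by linarith : (-1:ℝ) < ᾱ)),
      integral_rpow (Or.inl (by linarith : (-1:ℝ) < ᾱ))]
    -- now pure algebra
    set K : ℝ := ((n - j : ℕ) : ℝ) with hK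
    have hKval : K = (n:ℝ) - (j:ℝ) := by rw [hK, Nat.cast_sub hjn]
    have hK1 : 1 ≤ K := by
      rw [hK]; exact_mod_cast hk1
    have e1 : t n - t (j-1) = (K + 1) * τ := by rw [htn, htj1, hKval]; ring
    have e2 : t (n-1) - t (j-1) = K * τ := by rw [htn1, htj1, hKval]; ring
    have e3 : t n - t j = K * τ := by rw [htn, htj, hKval]; ring
    have e4 : t (n-1) - t j = (K - 1) * τ := by rw [htn1, htj, hKval]; ring
    rw [e1, e2, e3, e4]
    have hτ' : (0:ℝ) ≤ τ := hτ.le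
    rw [Real.mul_rpow (by linarith) hτ', Real.mul_rpow (by linarith) hτ',
      Real.mul_rpow (by linarith) hτ']
    have hAseq : Aseq (ᾱ+1) (n - j) = (K+1)^(ᾱ+1) - 2*K^(ᾱ+1) + (K-1)^(ᾱ+1) := by
      obtain ⟨k', hk'⟩ : ∃ k', n - j = k' + 1 := ⟨n - j - 1, by omega⟩
      rw [hk']
      show DD (ᾱ+1) (k' : ℝ) = _
      have : (k' : ℝ) = K - 1 := by
        rw [hK, hk']; push_cast; ring
      rw [this]
      unfold DD
      ring_nf
    rw [hAseq]
    rw [Real.rpow_add_one hτ.ne' ᾱ]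
    have hαne : ᾱ ≠ 0 := hα0.ne'
    have hα1ne : ᾱ + 1 ≠ 0 := by linarith
    field_simp
    ring

end PIop

open MeasureTheory intervalIntegral

/-- positive definiteness of the averaged PI operator. -/
theorem pi_operator_positive (ᾱ τ : ℝ) (hᾱ : ᾱ ∈ Set.Ioo (0:ℝ) 1) (hτ : 0 < τ)
    (t : ℕ → ℝ) (ht : ∀ j, t j = j * τ)
    (lam : ℕ → ℕ → ℝ)
    (hlam : ∀ n j, 1 ≤ j → j ≤ n →
      lam n j = (1/τ) * ∫ s in (t (n-1))..(t n),
        ∫ u in (t (j-1))..(min s (t j)), (s - u) ^ (ᾱ - 1) / Real.Gamma ᾱ)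
    (N : ℕ) (hN : 1 ≤ N) (v : ℕ → ℝ)
    (I : ℕ → ℝ)
    (hI : ∀ n, 1 ≤ n →
      I n = lam n 1 * v 1 + ∑ j ∈ Finset.Icc 2 n, lam n j * (v j + v (j-1)) / 2) :
    0 ≤ v 1 * I 1 + ∑ n ∈ Finset.Icc 2 N, (v n + v (n-1)) / 2 * I n := by
  obtain ⟨hα0, hα1⟩ := hᾱ
  have hp1 : 1 < ᾱ + 1 := by linarith
  have hp2 : ᾱ + 1 < 2 := by linarith
  have hc0pos : 0 < τ ^ ᾱ / (ᾱ * (ᾱ + 1) * Real.Gamma ᾱ) :=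
    div_pos (Real.rpow_pos_of_pos hτ ᾱ)
      (mul_pos (mul_pos hα0 (by linarith)) (Real.Gamma_pos_of_pos hα0))
  set w : ℕ → ℝ := fun n => if n = 1 then v 1 else (v n + v (n-1))/2 with hw
  have hI' : ∀ n, 1 ≤ n → I n = ∑ j ∈ Finset.Icc 1 n, lam n j * w j := by
    intro n hn
    rw [hI n hn]
    have hsplit : Finset.Icc 1 n = insert 1 (Finset.Icc 2 n) := by
      ext q; simp only [Finset.mem_insert, Finset.mem_Icc]; omega
    rw [hsplit, Finset.sum_insert (by simp [Finset.mem_Icc])]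
    have h1 : w 1 = v 1 := by simp [hw]
    rw [h1]
    congr 1
    refine Finset.sum_congr rfl fun q hq => ?_
    simp only [Finset.mem_Icc] at hq
    have h2 : w q = (v q + v (q-1))/2 := by
      simp only [hw]; rw [if_neg (by omega : ¬ q = 1)]
    rw [h2, mul_div_assoc]
  have hgoal : v 1 * I 1 + ∑ n ∈ Finset.Icc 2 N, (v n + v (n-1))/2 * I n
      = ∑ n ∈ Finset.Icc 1 N, w n * I n := by
    have hsplit : Finset.Icc 1 N = insert 1 (Finset.Icc 2 N) := by
      ext q; simp only [Finset.mem_insert, Finset.mem_Icc]; omega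
    rw [hsplit, Finset.sum_insert (by simp [Finset.mem_Icc])]
    have h1 : w 1 = v 1 := by simp [hw]
    rw [h1]
    congr 1
    refine Finset.sum_congr rfl fun q hq => ?_
    simp only [Finset.mem_Icc] at hq
    have h2 : w q = (v q + v (q-1))/2 := by
      simp only [hw]; rw [if_neg (by omega : ¬ q = 1)]
    rw [h2]
  rw [hgoal]
  have main : ∑ n ∈ Finset.Icc 1 N, w n * I n
      = (τ ^ ᾱ / (ᾱ * (ᾱ + 1) * Real.Gamma ᾱ)) *
          ∑ n ∈ Finset.Icc 1 N, ∑ j ∈ Finset.Icc 1 n,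
            (if n - j = 0 then 1 else PIop.Aseq (ᾱ + 1) (n - j)) * (w n * w j) := by
    rw [Finset.mul_sum]
    refine Finset.sum_congr rfl fun n hn => ?_
    simp only [Finset.mem_Icc] at hn
    rw [hI' n hn.1, Finset.mul_sum, Finset.mul_sum]
    refine Finset.sum_congr rfl fun q hq => ?_
    simp only [Finset.mem_Icc] at hq
    rw [PIop.lam_formula ᾱ τ ⟨hα0, hα1⟩ hτ t ht lam hlam hq.1 hq.2]
    ring
  rw [main]
  exact mul_nonneg hc0pos.le (PIop.triangle_nonneg hp1 hp2 N w)
end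

section
/- Let A_x be the one-dimensional compact averaging operator acting on grid functions vanishing at the boundary, defined by (A_x u)_i = (u_{i-1} + 10 u_i + u_{i+1})/12 for interior indices. Then for any grid function u vanishing on the boundary, the discrete L² norms satisfy (1/3)‖u‖² ≤ (u, A u) ≤ ‖u‖², where A is the two-dimensional tensor product A_x A_y. -/
lemma sum_Icc_shift (M : ℕ) (hM : 1 ≤ M) (g : ℕ → ℝ) :
    ∑ i ∈ Finset.Icc 1 (M-1), g i = ∑ k ∈ Finset.range (M-1), g (k+1) := by
  have h : Finset.Icc 1 (M-1) = Finset.Ico 1 M := by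
    ext x; simp only [Finset.mem_Icc, Finset.mem_Ico]; omega
  rw [h, Finset.sum_Ico_eq_sum_range]
  simp [add_comm]

lemma oneD_bilinear (M : ℕ) (hM : 2 ≤ M) (f g : ℕ → ℝ)
    (hf0 : f 0 = 0) (hfM : f M = 0) (hg0 : g 0 = 0) (hgM : g M = 0) :
    ∑ i ∈ Finset.Icc 1 (M-1), f i * ((g (i-1) + 10 * g i + g (i+1)) / 12)
      = ∑ i ∈ Finset.Icc 1 (M-1), f i * g i
        - (1/12) * ∑ i ∈ Finset.range M, (f (i+1) - f i) * (g (i+1) - g i) := by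
  rw [sum_Icc_shift M (by omega), sum_Icc_shift M (by omega)]
  have hM1 : M = (M-1) + 1 := by omega
  have expand : ∑ i ∈ Finset.range M, (f (i+1) - f i) * (g (i+1) - g i)
      = ∑ i ∈ Finset.range M, (f (i+1) * g (i+1) - f (i+1) * g i - f i * g (i+1) + f i * g i) :=
    Finset.sum_congr rfl (fun i _ => by ring)
  have A1 : ∑ i ∈ Finset.range M, f (i+1) * g (i+1)
      = ∑ i ∈ Finset.range (M-1), f (i+1) * g (i+1) := by
    rw [hM1, Finset.sum_range_succ]; rw [← hM1, hfM]; ring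
  have A2 : ∑ i ∈ Finset.range M, f (i+1) * g i
      = ∑ i ∈ Finset.range (M-1), f (i+1) * g i := by
    rw [hM1, Finset.sum_range_succ]; rw [← hM1, hfM]; ring
  have A3 : ∑ i ∈ Finset.range M, f i * g (i+1)
      = ∑ i ∈ Finset.range (M-1), f (i+1) * g (i+2) := by
    rw [hM1, Finset.sum_range_succ']; rw [hf0]; simp
  have A4 : ∑ i ∈ Finset.range M, f i * g i
      = ∑ i ∈ Finset.range (M-1), f (i+1) * g (i+1) := by
    rw [hM1, Finset.sum_range_succ']; rw [hf0]; simp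
  rw [expand]
  simp only [Finset.sum_add_distrib, Finset.sum_sub_distrib, A1, A2, A3, A4,
    Nat.add_sub_cancel]
  have key : ∑ k ∈ Finset.range (M-1), f (k+1) * ((g k + 10 * g (k+1) + g (k+2)) / 12)
      = (10 * ∑ k ∈ Finset.range (M-1), f (k+1) * g (k+1)
         + ∑ k ∈ Finset.range (M-1), f (k+1) * g k
         + ∑ k ∈ Finset.range (M-1), f (k+1) * g (k+2)) / 12 := by
    rw [Finset.mul_sum, ← Finset.sum_add_distrib, ← Finset.sum_add_distrib, Finset.sum_div]
    exact Finset.sum_congr rfl (fun k _ => by ring)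
  rw [key]; ring

lemma oneD_bound (M : ℕ) (hM : 2 ≤ M) (f : ℕ → ℝ) (hf0 : f 0 = 0) (hfM : f M = 0) :
    ∑ i ∈ Finset.range M, (f (i+1) - f i) * (f (i+1) - f i)
      ≤ 4 * ∑ i ∈ Finset.Icc 1 (M-1), f i * f i := by
  rw [sum_Icc_shift M (by omega)]
  have hM1 : M = (M-1) + 1 := by omega
  have step : ∑ i ∈ Finset.range M, (f (i+1) - f i) * (f (i+1) - f i)
      ≤ ∑ i ∈ Finset.range M, (2 * (f (i+1) * f (i+1)) + 2 * (f i * f i)) := by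
    refine Finset.sum_le_sum (fun i _ => ?_)
    nlinarith [sq_nonneg (f (i+1) + f i)]
  refine step.trans ?_
  have A1 : ∑ i ∈ Finset.range M, f (i+1) * f (i+1)
      = ∑ i ∈ Finset.range (M-1), f (i+1) * f (i+1) := by
    rw [hM1, Finset.sum_range_succ]; rw [← hM1, hfM]; ring
  have A4 : ∑ i ∈ Finset.range M, f i * f i
      = ∑ i ∈ Finset.range (M-1), f (i+1) * f (i+1) := by
    rw [hM1, Finset.sum_range_succ']; rw [hf0]; simp
  rw [Finset.sum_add_distrib, ← Finset.mul_sum, ← Finset.mul_sum, A1, A4]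
  linarith

/-- equivalence (1/3)‖u‖² ≤ (u, A u) ≤ ‖u‖² for the compact averaging operator. -/
theorem compact_operator_inner_bounds (Mx My : ℕ) (hMx : 2 ≤ Mx) (hMy : 2 ≤ My)
    (hx hy : ℝ) (hhx : 0 < hx) (hhy : 0 < hy)
    (u : ℕ → ℕ → ℝ)
    (hbd : ∀ i j, (i = 0 ∨ i = Mx ∨ j = 0 ∨ j = My) → u i j = 0)
    (Ax Ay A : (ℕ → ℕ → ℝ) → (ℕ → ℕ → ℝ))
    (hAx : ∀ v i j, Ax v i j =
      if 1 ≤ i ∧ i ≤ Mx - 1 then (v (i-1) j + 10 * v i j + v (i+1) j) / 12 else v i j)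
    (hAy : ∀ v i j, Ay v i j =
      if 1 ≤ j ∧ j ≤ My - 1 then (v i (j-1) + 10 * v i j + v i (j+1)) / 12 else v i j)
    (hA : ∀ v, A v = Ax (Ay v))
    (inner : (ℕ → ℕ → ℝ) → (ℕ → ℕ → ℝ) → ℝ)
    (hinner : ∀ v w, inner v w =
      hx * hy * ∑ i ∈ Finset.Icc 1 (Mx-1), ∑ j ∈ Finset.Icc 1 (My-1), v i j * w i j) :
    (1/3) * inner u u ≤ inner u (A u) ∧ inner u (A u) ≤ inner u u := by
  have hu0j : ∀ j, u 0 j = 0 := fun j => hbd 0 j (Or.inl rfl)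
  have huMj : ∀ j, u Mx j = 0 := fun j => hbd Mx j (Or.inr (Or.inl rfl))
  have hui0 : ∀ i, u i 0 = 0 := fun i => hbd i 0 (Or.inr (Or.inr (Or.inl rfl)))
  have huiM : ∀ i, u i My = 0 := fun i => hbd i My (Or.inr (Or.inr (Or.inr rfl)))
  set Ix := Finset.Icc 1 (Mx-1) with hIx
  set Iy := Finset.Icc 1 (My-1) with hIy
  set w := Ay u with hw
  have hw_int : ∀ i j, j ∈ Iy → w i j = (u i (j-1) + 10 * u i j + u i (j+1)) / 12 := by
    intro i j hj
    rw [hw, hAy, if_pos (Finset.mem_Icc.mp hj)]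
  have hw0 : ∀ j, w 0 j = 0 := by
    intro j; rw [hw, hAy]; split <;> simp [hu0j]
  have hwM : ∀ j, w Mx j = 0 := by
    intro j; rw [hw, hAy]; split <;> simp [huMj]
  have hAu : ∀ i j, i ∈ Ix → A u i j = (w (i-1) j + 10 * w i j + w (i+1) j) / 12 := by
    intro i j hi
    rw [hA, ← hw, hAx, if_pos (Finset.mem_Icc.mp hi)]
  -- quantities
  set S := ∑ i ∈ Ix, ∑ j ∈ Iy, u i j * A u i j with hS
  set N2 := ∑ i ∈ Ix, ∑ j ∈ Iy, u i j * u i j with hN2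
  set X := ∑ i ∈ Finset.range Mx, ∑ j ∈ Iy,
      (u (i+1) j - u i j) * (u (i+1) j - u i j) with hX
  set Y := ∑ i ∈ Ix, ∑ j ∈ Finset.range My,
      (u i (j+1) - u i j) * (u i (j+1) - u i j) with hY
  set Z := ∑ i ∈ Finset.range Mx, ∑ j ∈ Finset.range My,
      ((u (i+1) (j+1) - u i (j+1)) - (u (i+1) j - u i j))
        * ((u (i+1) (j+1) - u i (j+1)) - (u (i+1) j - u i j)) with hZ
  set T1 := ∑ j ∈ Iy, ∑ i ∈ Ix, u i j * w i j with hT1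
  set T2 := ∑ j ∈ Iy, ∑ i ∈ Finset.range Mx,
      (u (i+1) j - u i j) * (w (i+1) j - w i j) with hT2
  -- Step 1 : S = T1 - T2/12
  have h1 : S = T1 - (1/12) * T2 := by
    rw [hS, Finset.sum_comm]
    have perj : ∀ j ∈ Iy, ∑ i ∈ Ix, u i j * A u i j
        = ∑ i ∈ Ix, u i j * w i j
          - (1/12) * ∑ i ∈ Finset.range Mx, (u (i+1) j - u i j) * (w (i+1) j - w i j) := by
      intro j _
      have e1 : ∑ i ∈ Ix, u i j * A u i j
          = ∑ i ∈ Ix, u i j * ((w (i-1) j + 10 * w i j + w (i+1) j) / 12) :=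
        Finset.sum_congr rfl (fun i hi => by rw [hAu i j hi])
      rw [e1]
      exact oneD_bilinear Mx hMx (fun i => u i j) (fun i => w i j)
        (hu0j j) (huMj j) (hw0 j) (hwM j)
    rw [Finset.sum_congr rfl perj, Finset.sum_sub_distrib, ← Finset.mul_sum, hT1, hT2]
  -- Step 2 : T1 = N2 - Y/12
  have h2 : T1 = N2 - (1/12) * Y := by
    rw [hT1, Finset.sum_comm]
    have peri : ∀ i ∈ Ix, ∑ j ∈ Iy, u i j * w i j
        = ∑ j ∈ Iy, u i j * u i j
          - (1/12) * ∑ j ∈ Finset.range My, (u i (j+1) - u i j) * (u i (j+1) - u i j) := by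
      intro i _
      have e1 : ∑ j ∈ Iy, u i j * w i j
          = ∑ j ∈ Iy, u i j * ((u i (j-1) + 10 * u i j + u i (j+1)) / 12) :=
        Finset.sum_congr rfl (fun j hj => by rw [hw_int i j hj])
      rw [e1]
      exact oneD_bilinear My hMy (fun j => u i j) (fun j => u i j)
        (hui0 i) (huiM i) (hui0 i) (huiM i)
    rw [Finset.sum_congr rfl peri, Finset.sum_sub_distrib, ← Finset.mul_sum, hN2, hY]
  -- Step 3 : T2 = X - Z/12
  have h3 : T2 = X - (1/12) * Z := by
    have hDw : ∀ i j, j ∈ Iy → w (i+1) j - w i j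
        = ((u (i+1) (j-1) - u i (j-1)) + 10 * (u (i+1) j - u i j)
           + (u (i+1) (j+1) - u i (j+1))) / 12 := by
      intro i j hj
      rw [hw_int (i+1) j hj, hw_int i j hj]; ring
    have e1 : T2 = ∑ i ∈ Finset.range Mx, ∑ j ∈ Iy,
        (u (i+1) j - u i j) * (((u (i+1) (j-1) - u i (j-1))
          + 10 * (u (i+1) j - u i j) + (u (i+1) (j+1) - u i (j+1))) / 12) := by
      rw [hT2, Finset.sum_comm]
      exact Finset.sum_congr rfl (fun i _ => Finset.sum_congr rfl
        (fun j hj => by rw [hDw i j hj]))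
    rw [e1]
    have peri : ∀ i ∈ Finset.range Mx, ∑ j ∈ Iy,
        (u (i+1) j - u i j) * (((u (i+1) (j-1) - u i (j-1))
          + 10 * (u (i+1) j - u i j) + (u (i+1) (j+1) - u i (j+1))) / 12)
        = ∑ j ∈ Iy, (u (i+1) j - u i j) * (u (i+1) j - u i j)
          - (1/12) * ∑ j ∈ Finset.range My,
              ((u (i+1) (j+1) - u i (j+1)) - (u (i+1) j - u i j))
                * ((u (i+1) (j+1) - u i (j+1)) - (u (i+1) j - u i j)) := by
      intro i _
      exact oneD_bilinear My hMy (fun j => u (i+1) j - u i j) (fun j => u (i+1) j - u i j)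
        (by simp [hui0]) (by simp [huiM]) (by simp [hui0]) (by simp [huiM])
    rw [Finset.sum_congr rfl peri, Finset.sum_sub_distrib, ← Finset.mul_sum, hX, hZ]
  -- bounds
  have hXle : X ≤ 4 * N2 := by
    rw [hX, Finset.sum_comm]
    calc ∑ j ∈ Iy, ∑ i ∈ Finset.range Mx, (u (i+1) j - u i j) * (u (i+1) j - u i j)
        ≤ ∑ j ∈ Iy, 4 * ∑ i ∈ Ix, u i j * u i j :=
          Finset.sum_le_sum (fun j _ =>
            oneD_bound Mx hMx (fun i => u i j) (hu0j j) (huMj j))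
      _ = 4 * N2 := by rw [← Finset.mul_sum, hN2, Finset.sum_comm]
  have hYle : Y ≤ 4 * N2 := by
    rw [hY]
    calc ∑ i ∈ Ix, ∑ j ∈ Finset.range My, (u i (j+1) - u i j) * (u i (j+1) - u i j)
        ≤ ∑ i ∈ Ix, 4 * ∑ j ∈ Iy, u i j * u i j :=
          Finset.sum_le_sum (fun i _ =>
            oneD_bound My hMy (fun j => u i j) (hui0 i) (huiM i))
      _ = 4 * N2 := by rw [← Finset.mul_sum, hN2]
  have hZle : Z ≤ 4 * X := by
    rw [hZ, hX]
    calc ∑ i ∈ Finset.range Mx, ∑ j ∈ Finset.range My,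
          ((u (i+1) (j+1) - u i (j+1)) - (u (i+1) j - u i j))
            * ((u (i+1) (j+1) - u i (j+1)) - (u (i+1) j - u i j))
        ≤ ∑ i ∈ Finset.range Mx, 4 * ∑ j ∈ Iy, (u (i+1) j - u i j) * (u (i+1) j - u i j) :=
          Finset.sum_le_sum (fun i _ =>
            oneD_bound My hMy (fun j => u (i+1) j - u i j)
              (by simp [hui0]) (by simp [huiM]))
      _ = 4 * ∑ i ∈ Finset.range Mx, ∑ j ∈ Iy, (u (i+1) j - u i j) * (u (i+1) j - u i j) := by
          rw [← Finset.mul_sum]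
  have hX0 : 0 ≤ X :=
    Finset.sum_nonneg (fun i _ => Finset.sum_nonneg (fun j _ => mul_self_nonneg _))
  have hY0 : 0 ≤ Y :=
    Finset.sum_nonneg (fun i _ => Finset.sum_nonneg (fun j _ => mul_self_nonneg _))
  have hZ0 : 0 ≤ Z :=
    Finset.sum_nonneg (fun i _ => Finset.sum_nonneg (fun j _ => mul_self_nonneg _))
  have hSid : S = N2 - (1/12) * Y - (1/12) * X + (1/144) * Z := by
    rw [h1, h2, h3]; ring
  have hlow : (1/3) * N2 ≤ S := by linarith
  have hup : S ≤ N2 := by linarith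
  have hxy : (0:ℝ) < hx * hy := mul_pos hhx hhy
  rw [hinner, hinner]
  constructor
  · nlinarith [mul_le_mul_of_nonneg_left hlow hxy.le]
  · nlinarith [mul_le_mul_of_nonneg_left hup hxy.le]
end

section
/- For a function G ∈ C⁶ on an interval [l,r] with uniform grid x_i = l + iκ, for each interior index i there exists θ_i ∈ (x_{i-1}, x_{i+1}) such that (1/12)[G''(x_{i-1}) + 10 G''(x_i) + G''(x_{i+1})] − (κ⁴/240) G⁽⁶⁾(θ_i) = (G(x_{i-1}) − 2G(x_i) + G(x_{i+1}))/κ². -/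
/-!
Write `c = x_i`, `h = κ` and put `φ(t) = G(c + t) + G(c - t)`, whose odd derivatives vanish
at `0`. The function `F(t) = φ(t) - φ(0) - t²/12 (φ''(t) + 5 φ''(0)) - C t⁶`, with `C` chosen so
that `F(h) = 0`, vanishes at `0` together with `F'`, `F''` and `F'''`, so Rolle's theorem applied
four times gives a zero `t ∈ (0, h)` of `F⁗(t) = -(2t/3) φ⁽⁵⁾(t) - t²/12 φ⁽⁶⁾(t) - 360 C t²`.
The mean value theorem for `φ⁽⁵⁾` on `[0, t]` turns this into
`-480 C = 8/9 φ⁽⁶⁾(τ) + 1/9 φ⁽⁶⁾(t)`, and the intermediate value theorem, once for `φ⁽⁶⁾` and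
once for `G⁽⁶⁾`, produces `θ` with `-480 C = 2 G⁽⁶⁾(θ)`.
-/

open Set

structure HasDerivSeqOn (f : ℕ → ℝ → ℝ) (n : ℕ) (a b : ℝ) : Prop where
  continuousOn : ∀ k ≤ n, ContinuousOn (f k) (Icc a b)
  hasDerivAt : ∀ k < n, ∀ t ∈ Ioo a b, HasDerivAt (f k) (f (k + 1) t) t

theorem ContDiffOn.hasDerivSeqOn_iteratedDerivWithin {G : ℝ → ℝ} {n : ℕ} {a b : ℝ}
    (hG : ContDiffOn ℝ n G (Icc a b)) (hab : a < b) :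
    HasDerivSeqOn (fun k => iteratedDerivWithin k G (Icc a b)) n a b where
  continuousOn k hk :=
    hG.continuousOn_iteratedDerivWithin (by exact_mod_cast hk) (uniqueDiffOn_Icc hab)
  hasDerivAt k hk t ht := by
    have hd := (hG.differentiableOn_iteratedDerivWithin (by exact_mod_cast hk)
      (uniqueDiffOn_Icc hab) t (Ioo_subset_Icc_self ht)).hasDerivWithinAt
    rw [← iteratedDerivWithin_succ] at hd
    exact hd.hasDerivAt (Icc_mem_nhds ht.1 ht.2)

theorem exists_mem_uIcc_eq_convex_combination {f : ℝ → ℝ} {a b : ℝ}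
    (hf : ContinuousOn f (uIcc a b)) {v w : ℝ} (hv : 0 ≤ v) (hw : 0 ≤ w) (hvw : v + w = 1) :
    ∃ c ∈ uIcc a b, f c = v * f a + w * f b :=
  intermediate_value_uIcc hf (segment_subset_uIcc _ _ ⟨v, w, hv, hw, hvw, rfl⟩)

/-- With `f k` in the role of `φ⁽ᵏ⁾`, `compactAux f C k` is `F⁽ᵏ⁾` from the header for `k ≤ 4`. -/
noncomputable def compactAux (f : ℕ → ℝ → ℝ) (C : ℝ) : ℕ → ℝ → ℝ
  | 0 => fun t => f 0 t - f 0 0 - t ^ 2 / 12 * (f 2 t + 5 * f 2 0) - C * t ^ 6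
  | 1 => fun t => f 1 t - t / 6 * (f 2 t + 5 * f 2 0) - t ^ 2 / 12 * f 3 t - 6 * C * t ^ 5
  | 2 => fun t => 5 / 6 * (f 2 t - f 2 0) - t / 3 * f 3 t - t ^ 2 / 12 * f 4 t - 30 * C * t ^ 4
  | 3 => fun t => f 3 t / 2 - t / 2 * f 4 t - t ^ 2 / 12 * f 5 t - 120 * C * t ^ 3
  | _ => fun t => -(2 * t / 3 * f 5 t) - t ^ 2 / 12 * f 6 t - 360 * C * t ^ 2

namespace HasDerivSeqOn

variable {f : ℕ → ℝ → ℝ} {n : ℕ} {a b : ℝ}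

theorem mono (hf : HasDerivSeqOn f n a b) {a' b' : ℝ} (ha : a ≤ a') (hb : b' ≤ b) :
    HasDerivSeqOn f n a' b' where
  continuousOn k hk := (hf.continuousOn k hk).mono (Icc_subset_Icc ha hb)
  hasDerivAt k hk t ht := hf.hasDerivAt k hk t (Ioo_subset_Ioo ha hb ht)

theorem exists_eq_zero (hf : HasDerivSeqOn f (n + 1) a b) (hab : a < b)
    (hfa : ∀ k ≤ n, f k a = 0) (hfb : f 0 b = 0) : ∃ t ∈ Ioo a b, f (n + 1) t = 0 := by
  induction n with
  | zero =>
    exact exists_hasDerivAt_eq_zero hab (hf.continuousOn 0 (by omega))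
      ((hfa 0 le_rfl).trans hfb.symm) (hf.hasDerivAt 0 (by omega))
  | succ n ih =>
    obtain ⟨s, hs, hfs⟩ := ih ⟨fun k hk => hf.continuousOn k (by omega),
      fun k hk => hf.hasDerivAt k (by omega)⟩ (fun k hk => hfa k (by omega))
    obtain ⟨t, ht, hft⟩ := exists_hasDerivAt_eq_zero hs.1
      ((hf.continuousOn (n + 1) (by omega)).mono (Icc_subset_Icc_right hs.2.le))
      ((hfa (n + 1) le_rfl).trans hfs.symm)
      (fun t ht => hf.hasDerivAt (n + 1) (by omega) t (Ioo_subset_Ioo_right hs.2.le ht))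
    exact ⟨t, Ioo_subset_Ioo_right hs.2.le ht, hft⟩

theorem add_reflect (hf : HasDerivSeqOn f n (a - b) (a + b)) :
    HasDerivSeqOn (fun k t => f k (a + t) + (-1) ^ k * f k (a - t)) n 0 b where
  continuousOn k hk := by
    have hp : MapsTo (a + ·) (Icc 0 b) (Icc (a - b) (a + b)) :=
      fun t ht => ⟨by linarith [ht.1, ht.2], by linarith [ht.2]⟩
    have hm : MapsTo (a - ·) (Icc 0 b) (Icc (a - b) (a + b)) :=
      fun t ht => ⟨by linarith [ht.2], by linarith [ht.1, ht.2]⟩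
    have := hf.continuousOn k hk
    exact ((this.comp (by fun_prop) hp).add (continuousOn_const.mul (this.comp (by fun_prop) hm)))
  hasDerivAt k hk t ht := by
    have hp := (hf.hasDerivAt k hk (a + t) ⟨by linarith [ht.1, ht.2], by linarith [ht.2]⟩).comp t
      ((hasDerivAt_id t).const_add a)
    have hm := (hf.hasDerivAt k hk (a - t) ⟨by linarith [ht.2], by linarith [ht.1, ht.2]⟩).comp t
      ((hasDerivAt_id t).const_sub a)
    exact (hp.add (hm.const_mul ((-1) ^ k))).congr_deriv (by ring)

theorem hasDerivSeqOn_compactAux (hf : HasDerivSeqOn f 6 a b) (C : ℝ) :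
    HasDerivSeqOn (compactAux f C) 4 a b := by
  refine ⟨fun k hk => ?_, fun k hk t ht => ?_⟩
  · have hc := hf.continuousOn
    interval_cases k <;> simp only [compactAux] <;> fun_prop (disch := omega)
  · have d := fun j (hj : j < 6) => hf.hasDerivAt j hj t ht
    have p := @hasDerivAt_pow ℝ _
    have i := hasDerivAt_id' (x := t)
    interval_cases k
    · exact ((((d 0 (by norm_num)).sub_const (f 0 0)).sub (((p 2 t).div_const 12).mul
        ((d 2 (by norm_num)).add_const (5 * f 2 0)))).sub ((p 6 t).const_mul C)).congr_deriv
        (by simp only [compactAux]; ring)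
    · exact ((((d 1 (by norm_num)).sub ((i.div_const 6).mul
        ((d 2 (by norm_num)).add_const (5 * f 2 0)))).sub
        (((p 2 t).div_const 12).mul (d 3 (by norm_num)))).sub
        ((p 5 t).const_mul (6 * C))).congr_deriv (by simp only [compactAux]; ring)
    · exact ((((((d 2 (by norm_num)).sub_const (f 2 0)).const_mul (5 / 6)).sub
        ((i.div_const 3).mul (d 3 (by norm_num)))).sub
        (((p 2 t).div_const 12).mul (d 4 (by norm_num)))).sub
        ((p 4 t).const_mul (30 * C))).congr_deriv (by simp only [compactAux]; ring)
    · exact (((((d 3 (by norm_num)).div_const 2).sub ((i.div_const 2).mul (d 4 (by norm_num)))).sub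
        (((p 2 t).div_const 12).mul (d 5 (by norm_num)))).sub
        ((p 3 t).const_mul (120 * C))).congr_deriv (by simp only [compactAux]; ring)

theorem exists_compact_difference_of_odd_deriv_eq_zero (hf : HasDerivSeqOn f 6 0 b) (hb : 0 < b)
    (hf1 : f 1 0 = 0) (hf3 : f 3 0 = 0) (hf5 : f 5 0 = 0) :
    ∃ τ ∈ Ioo 0 b, f 0 b - f 0 0 = b ^ 2 / 12 * (f 2 b + 5 * f 2 0) - b ^ 6 / 480 * f 6 τ := by
  set C := (f 0 b - f 0 0 - b ^ 2 / 12 * (f 2 b + 5 * f 2 0)) / b ^ 6 with hC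
  obtain ⟨t, ht, hFt⟩ := (hf.hasDerivSeqOn_compactAux C).exists_eq_zero hb
    (fun k hk => by interval_cases k <;> simp [compactAux, hf1, hf3])
    (by simp only [compactAux]; rw [hC]; field_simp; ring)
  obtain ⟨τ, hτ, hτ6⟩ := exists_hasDerivAt_eq_slope (f 5) (f 6) ht.1
    ((hf.continuousOn 5 (by norm_num)).mono (Icc_subset_Icc_right ht.2.le))
    (fun s hs => hf.hasDerivAt 5 (by norm_num) s (Ioo_subset_Ioo_right ht.2.le hs))
  have hf5t : f 5 t = t * f 6 τ := by
    rw [hτ6, hf5, sub_zero, sub_zero, mul_div_cancel₀ _ ht.1.ne']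
  have hC6 : -480 * C = 8 / 9 * f 6 τ + 1 / 9 * f 6 t := by
    have : t ^ 2 * (-480 * C - (8 / 9 * f 6 τ + 1 / 9 * f 6 t)) = 0 := by
      simp only [compactAux] at hFt
      linear_combination (4 / 3) * hFt + (8 * t / 9) * hf5t
    simpa [ht.1.ne', sub_eq_zero] using this
  have hτt : uIcc τ t ⊆ Icc 0 b := by
    rw [uIcc_of_le hτ.2.le]; exact Icc_subset_Icc hτ.1.le ht.2.le
  obtain ⟨σ, hσ, hσ6⟩ := exists_mem_uIcc_eq_convex_combination
    ((hf.continuousOn 6 le_rfl).mono hτt) (v := 8 / 9) (w := 1 / 9)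
    (by norm_num) (by norm_num) (by norm_num)
  refine ⟨σ, ?_, ?_⟩
  · rw [uIcc_of_le hτ.2.le] at hσ
    exact ⟨hτ.1.trans_le hσ.1, hσ.2.trans_lt ht.2⟩
  · rw [hσ6, ← hC6, hC]
    field_simp
    ring

theorem exists_compact_difference (hf : HasDerivSeqOn f 6 (a - b) (a + b)) (hb : 0 < b) :
    ∃ θ ∈ Ioo (a - b) (a + b), 1 / 12 * (f 2 (a - b) + 10 * f 2 a + f 2 (a + b))
      - b ^ 4 / 240 * f 6 θ = (f 0 (a - b) - 2 * f 0 a + f 0 (a + b)) / b ^ 2 := by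
  obtain ⟨τ, hτ, hτf⟩ := hf.add_reflect.exists_compact_difference_of_odd_deriv_eq_zero hb
    (by norm_num) (by norm_num) (by norm_num)
  have hτc : uIcc (a - τ) (a + τ) = Icc (a - τ) (a + τ) := uIcc_of_le (by linarith [hτ.1])
  have hτb : uIcc (a - τ) (a + τ) ⊆ Icc (a - b) (a + b) := by
    rw [hτc]; exact Icc_subset_Icc (by linarith [hτ.2]) (by linarith [hτ.2])
  obtain ⟨θ, hθ, hθf⟩ := exists_mem_uIcc_eq_convex_combination (v := 1 / 2) (w := 1 / 2)
    ((hf.continuousOn 6 le_rfl).mono hτb) (by norm_num) (by norm_num) (by norm_num)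
  rw [hτc] at hθ
  refine ⟨θ, ⟨by linarith [hθ.1, hτ.2], by linarith [hθ.2, hτ.2]⟩, ?_⟩
  simp only [add_zero, sub_zero] at hτf
  rw [hθf, eq_div_iff (by positivity)]
  linear_combination -hτf

end HasDerivSeqOn

theorem compact_difference_identity_general (l r : ℝ) (hlr : l < r) (M : ℕ)
    (κ : ℝ) (hκ : κ = (r - l) / M) (x : ℕ → ℝ) (hx : ∀ i, x i = l + i * κ)
    (G : ℝ → ℝ) (hG : ContDiffOn ℝ 6 G (Set.Icc l r)) :
    ∀ i, 1 ≤ i → i ≤ M - 1 → ∃ θ ∈ Set.Ioo (x (i-1)) (x (i+1)),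
      (1/12) * (iteratedDerivWithin 2 G (Set.Icc l r) (x (i-1))
          + 10 * iteratedDerivWithin 2 G (Set.Icc l r) (x i)
          + iteratedDerivWithin 2 G (Set.Icc l r) (x (i+1)))
        - κ^4 / 240 * iteratedDerivWithin 6 G (Set.Icc l r) θ
      = (G (x (i-1)) - 2 * G (x i) + G (x (i+1))) / κ^2 := by
  intro i hi1 hi2
  have hM : (0 : ℝ) < M := by exact_mod_cast (by omega : 0 < M)
  have hκ0 : 0 < κ := by rw [hκ]; exact div_pos (sub_pos.2 hlr) hM
  have hxm : x (i - 1) = x i - κ := by rw [hx, hx, Nat.cast_sub hi1]; push_cast; ring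
  have hxp : x (i + 1) = x i + κ := by rw [hx, hx]; push_cast; ring
  have hlx : l ≤ x i - κ := by rw [← hxm, hx]; exact le_add_of_nonneg_right (by positivity)
  have hxr : x i + κ ≤ r := by
    have hiM : ((i + 1 : ℕ) : ℝ) ≤ M := by exact_mod_cast (by omega : i + 1 ≤ M)
    have hMκ : M * κ = r - l := by rw [hκ]; field_simp
    rw [← hxp, hx]; nlinarith
  have hg := (hG.hasDerivSeqOn_iteratedDerivWithin hlr).mono hlx hxr
  simpa only [hxm, hxp, iteratedDerivWithin_zero] using hg.exists_compact_difference hκ0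

/-- compact-difference identity with remainder for G ∈ C⁶([l,r]). -/
theorem compact_difference_identity (l r : ℝ) (hlr : l < r) (M : ℕ) (hM : 2 ≤ M)
    (κ : ℝ) (hκ : κ = (r - l) / M) (x : ℕ → ℝ) (hx : ∀ i, x i = l + i * κ)
    (G : ℝ → ℝ) (hG : ContDiffOn ℝ 6 G (Set.Icc l r)) :
    ∀ i, 1 ≤ i → i ≤ M - 1 → ∃ θ ∈ Set.Ioo (x (i-1)) (x (i+1)),
      (1/12) * (iteratedDerivWithin 2 G (Set.Icc l r) (x (i-1))
          + 10 * iteratedDerivWithin 2 G (Set.Icc l r) (x i)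
          + iteratedDerivWithin 2 G (Set.Icc l r) (x (i+1)))
        - κ^4 / 240 * iteratedDerivWithin 6 G (Set.Icc l r) θ
      = (G (x (i-1)) - 2 * G (x i) + G (x (i+1))) / κ^2 :=
  compact_difference_identity_general l r hlr M κ hκ x hx G hG
end

section
/- Let Ĝ : [0,T] → ℝ be C² on (0,T] with |Ĝ''(t)| ≤ Q t^{α₀−2} for some α₀ ∈ (1,2). Define the midpoint-trapezoidal error R₂ⁿ = (1/τ)∫_{t_{n-1}}^{t_n} Ĝ(t) dt − (Ĝ(t_n) + Ĝ(t_{n-1}))/2. Then τ ∑_{n=1}^N |R₂ⁿ| ≤ C τ² where C depends only on Q, α₀ and T. -/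
/-!
Integrating by parts twice against the Peano kernel `(x - a) * (b - x) / 2`, whose maximum is
`(b - a) ^ 2 / 8`, bounds the trapezoidal error on `[a, b]` by `(b - a) ^ 2 / 8 * ∫ₐᵇ |Ĝ''|`.
On the first cell, where `Ĝ''` may blow up at `0`, the same bound follows by letting the left
endpoint tend to `0`. Summing over the cells gives `τ² / 8 * ∫₀ᵀ Q s ^ (α₀ - 2) ds`, which is finite
because `α₀ > 1`.
-/

open MeasureTheory intervalIntegral Set Filter Topology

noncomputable def trapezoidError (G : ℝ → ℝ) (a b : ℝ) : ℝ :=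
  (∫ s in a..b, G s) - (b - a) * (G b + G a) / 2

section TrapezoidError

variable {G G' G'' w : ℝ → ℝ} {a b : ℝ}

theorem trapezoidError_eq_mul_sub (G : ℝ → ℝ) (hab : a ≠ b) :
    trapezoidError G a b = (b - a) * ((1 / (b - a)) * (∫ s in a..b, G s) - (G b + G a) / 2) := by
  have : b - a ≠ 0 := sub_ne_zero.2 hab.symm
  rw [trapezoidError]
  field_simp

theorem continuousOn_trapezoidError_left (hab : a ≤ b) (hG : ContinuousOn G (Icc a b)) :
    ContinuousOn (fun x => trapezoidError G x b) (Icc a b) := by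
  have hprim := continuousOn_primitive_interval_left (μ := volume)
    (hG.integrableOn_Icc (μ := volume) |>.mono_set (uIcc_of_le hab).subset)
  rw [uIcc_of_le hab] at hprim
  exact hprim.sub (((continuousOn_const.sub continuousOn_id).mul
    (continuousOn_const.add hG)).div_const 2)

theorem trapezoidError_eq_neg_integral_peano
    (hG' : ∀ x ∈ uIcc a b, HasDerivAt G (G' x) x)
    (hG'' : ∀ x ∈ uIcc a b, HasDerivAt G' (G'' x) x)
    (hint : IntervalIntegrable G'' volume a b) :
    trapezoidError G a b = -∫ x in a..b, (x - a) * (b - x) / 2 * G'' x := by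
  have hkernel : ∀ x, HasDerivAt (fun s => (s - a) * (b - s) / 2) ((a + b - 2 * x) / 2) x :=
    fun x => ((((hasDerivAt_id' x).sub_const a).mul
      ((hasDerivAt_id' x).const_sub b)).div_const 2).congr_deriv (by ring)
  have hkernel' : ∀ x, HasDerivAt (fun s => (a + b - 2 * s) / 2) (-1) x :=
    fun x => ((((hasDerivAt_id' x).const_mul 2).const_sub (a + b)).div_const 2).congr_deriv
      (by ring)
  have hG'cont : ContinuousOn G' (uIcc a b) :=
    fun x hx => (hG'' x hx).continuousAt.continuousWithinAt
  rw [trapezoidError,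
    intervalIntegral.integral_mul_deriv_eq_deriv_mul (fun x _ => hkernel x) hG''
      ((by fun_prop : Continuous fun s : ℝ => (a + b - 2 * s) / 2).intervalIntegrable a b) hint,
    intervalIntegral.integral_mul_deriv_eq_deriv_mul (fun x _ => hkernel' x) hG'
      intervalIntegrable_const hG'cont.intervalIntegrable]
  simp only [neg_one_mul, intervalIntegral.integral_neg]
  ring

theorem intervalIntegrable_of_hasDerivAt_of_abs_le (hab : a ≤ b)
    (hG' : ∀ x ∈ Ioc a b, HasDerivAt G (G' x) x) (hbd : ∀ x ∈ Ioc a b, |G' x| ≤ w x)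
    (hw : IntervalIntegrable w volume a b) : IntervalIntegrable G' volume a b := by
  rw [intervalIntegrable_iff_integrableOn_Ioc_of_le hab] at hw ⊢
  have hmeas : AEStronglyMeasurable G' (volume.restrict (Ioc a b)) :=
    (measurable_deriv G).aestronglyMeasurable.congr <|
      (ae_restrict_iff' measurableSet_Ioc).2 <| .of_forall fun x hx => (hG' x hx).deriv
  exact hw.mono' hmeas <| (ae_restrict_iff' measurableSet_Ioc).2 <| .of_forall hbd

theorem peano_kernel_mem_Icc {x : ℝ} (hx : x ∈ Icc a b) :
    (x - a) * (b - x) / 2 ∈ Icc 0 ((b - a) ^ 2 / 8) := by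
  obtain ⟨hax, hxb⟩ := hx
  constructor <;> nlinarith [sq_nonneg (a + b - 2 * x)]

theorem abs_trapezoidError_le_of_hasDerivAt (hab : a ≤ b)
    (hG' : ∀ x ∈ Icc a b, HasDerivAt G (G' x) x)
    (hG'' : ∀ x ∈ Icc a b, HasDerivAt G' (G'' x) x)
    (hbd : ∀ x ∈ Icc a b, |G'' x| ≤ w x) (hw : IntervalIntegrable w volume a b) :
    |trapezoidError G a b| ≤ (b - a) ^ 2 / 8 * ∫ x in a..b, w x := by
  have hint : IntervalIntegrable G'' volume a b :=
    intervalIntegrable_of_hasDerivAt_of_abs_le hab (fun x hx => hG'' x (Ioc_subset_Icc_self hx))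
      (fun x hx => hbd x (Ioc_subset_Icc_self hx)) hw
  rw [← uIcc_of_le hab] at hG' hG''
  rw [trapezoidError_eq_neg_integral_peano hG' hG'' hint, abs_neg, ← Real.norm_eq_abs,
    ← intervalIntegral.integral_const_mul]
  refine norm_integral_le_of_norm_le hab (.of_forall fun x hx => ?_) (hw.const_mul _)
  obtain ⟨hφ0, hφle⟩ := peano_kernel_mem_Icc (Ioc_subset_Icc_self hx)
  rw [Real.norm_eq_abs, abs_mul, abs_of_nonneg hφ0]
  exact mul_le_mul hφle (hbd x (Ioc_subset_Icc_self hx)) (abs_nonneg _) (hφ0.trans hφle)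

theorem abs_trapezoidError_le (hab : a < b) (hG : ContinuousOn G (Icc a b))
    (hG' : ∀ x ∈ Ioc a b, HasDerivAt G (G' x) x)
    (hG'' : ∀ x ∈ Ioc a b, HasDerivAt G' (G'' x) x)
    (hbd : ∀ x ∈ Ioc a b, |G'' x| ≤ w x) (hw : IntervalIntegrable w volume a b) :
    |trapezoidError G a b| ≤ (b - a) ^ 2 / 8 * ∫ x in a..b, w x := by
  have hw0 : ∀ x ∈ Ioc a b, 0 ≤ w x := fun x hx => (abs_nonneg _).trans (hbd x hx)
  have hlim : Tendsto (fun ε => |trapezoidError G ε b|) (𝓝[Ioo a b] a)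
      (𝓝 |trapezoidError G a b|) :=
    ((continuousOn_trapezoidError_left hab.le hG a (left_mem_Icc.2 hab.le)).mono
      Ioo_subset_Icc_self).abs
  have : (𝓝[Ioo a b] a).NeBot := left_nhdsWithin_Ioo_neBot hab
  refine le_of_tendsto hlim (eventually_nhdsWithin_of_forall fun ε hε => ?_)
  have hsub : Icc ε b ⊆ Ioc a b := Icc_subset_Ioc_iff hε.2.le |>.2 ⟨hε.1, le_rfl⟩
  calc |trapezoidError G ε b|
      ≤ (b - ε) ^ 2 / 8 * ∫ x in ε..b, w x :=
        abs_trapezoidError_le_of_hasDerivAt hε.2.le (fun x hx => hG' x (hsub hx))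
          (fun x hx => hG'' x (hsub hx)) (fun x hx => hbd x (hsub hx))
          (hw.mono_set (by simpa [uIcc_of_le, hab.le, hε.2.le] using Icc_subset_Icc_left hε.1.le))
    _ ≤ (b - a) ^ 2 / 8 * ∫ x in a..b, w x := by
        refine mul_le_mul (by nlinarith [hε.1, hε.2])
          (integral_mono_interval hε.1.le hε.2.le le_rfl
            ((ae_restrict_iff' measurableSet_Ioc).2 (.of_forall hw0)) hw)
          (integral_nonneg hε.2.le fun x hx => hw0 x (hsub hx)) (by positivity)

end TrapezoidError

theorem sum_integral_uniform_grid (f : ℝ → ℝ) (τ : ℝ)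
    (hf : ∀ u v, IntervalIntegrable f volume u v) (N : ℕ) :
    ∑ n ∈ Finset.Icc 1 N, ∫ s in (((n - 1 : ℕ) : ℝ) * τ)..((n : ℝ) * τ), f s
      = ∫ s in (0 : ℝ)..(N * τ), f s := by
  induction N with
  | zero => simp
  | succ N ih =>
    rw [Finset.sum_Icc_succ_top (by omega), ih, Nat.add_sub_cancel]
    exact integral_add_adjacent_intervals (hf _ _) (hf _ _)

/-- second-order summed bound for the midpoint-trapezoidal error R₂ⁿ. -/
theorem midpoint_trapezoid_error_bound (Q α₀ T : ℝ) (hQ : 0 < Q)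
    (hα₀ : α₀ ∈ Set.Ioo (1:ℝ) 2) (hT : 0 < T) :
    ∃ C > 0, ∀ (N : ℕ), 0 < N → ∀ (τ : ℝ), τ = T / N →
      ∀ (G G' G'' : ℝ → ℝ),
      ContinuousOn G (Set.Icc 0 T) →
      (∀ s ∈ Set.Ioc 0 T, HasDerivAt G (G' s) s) →
      (∀ s ∈ Set.Ioc 0 T, HasDerivAt G' (G'' s) s) →
      (∀ s ∈ Set.Ioc 0 T, |G'' s| ≤ Q * s ^ (α₀ - 2)) →
      τ * ∑ n ∈ Finset.Icc 1 N,
        |(1/τ) * (∫ s in (((n-1 : ℕ) : ℝ) * τ)..((n : ℝ) * τ), G s)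
          - (G ((n : ℝ) * τ) + G (((n-1 : ℕ) : ℝ) * τ)) / 2|
        ≤ C * τ^2 := by
  have hα : 0 < α₀ - 1 := by linarith [hα₀.1]
  refine ⟨Q * T ^ (α₀ - 1) / (8 * (α₀ - 1)), by positivity, ?_⟩
  intro N hN τ hτ G G' G'' hG hG' hG'' hbd
  have hτ0 : 0 < τ := hτ ▸ by positivity
  have hNτ : N * τ = T := by rw [hτ]; field_simp
  have hw : ∀ u v, IntervalIntegrable (fun s => Q * s ^ (α₀ - 2)) volume u v :=
    fun u v => (intervalIntegrable_rpow' (by linarith)).const_mul Q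
  have hcell : ∀ n ∈ Finset.Icc 1 N,
      τ * |(1/τ) * (∫ s in (((n-1 : ℕ) : ℝ) * τ)..((n : ℝ) * τ), G s)
          - (G ((n : ℝ) * τ) + G (((n-1 : ℕ) : ℝ) * τ)) / 2|
        ≤ τ ^ 2 / 8 * ∫ s in (((n-1 : ℕ) : ℝ) * τ)..((n : ℝ) * τ), Q * s ^ (α₀ - 2) := by
    intro n hn
    obtain ⟨hn1, hnN⟩ := Finset.mem_Icc.1 hn
    have hlen : (n : ℝ) * τ - ((n - 1 : ℕ) : ℝ) * τ = τ := by
      rw [Nat.cast_sub hn1]; ring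
    have hlo : 0 ≤ ((n - 1 : ℕ) : ℝ) * τ := by positivity
    have hhi : n * τ ≤ T := hNτ ▸ by gcongr
    have hsub := Ioc_subset_Ioc hlo hhi
    have habs := abs_trapezoidError_le (by linarith) (hG.mono (Icc_subset_Icc hlo hhi))
      (fun x hx => hG' x (hsub hx)) (fun x hx => hG'' x (hsub hx))
      (fun x hx => hbd x (hsub hx)) (hw _ _)
    rwa [trapezoidError_eq_mul_sub G (by linarith), hlen, abs_mul, abs_of_pos hτ0] at habs
  calc _ ≤ ∑ n ∈ Finset.Icc 1 N,
        τ ^ 2 / 8 * ∫ s in (((n-1 : ℕ) : ℝ) * τ)..((n : ℝ) * τ), Q * s ^ (α₀ - 2) := by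
        rw [Finset.mul_sum]; exact Finset.sum_le_sum hcell
    _ = τ ^ 2 / 8 * ∫ s in (0 : ℝ)..T, Q * s ^ (α₀ - 2) := by
        rw [← Finset.mul_sum, sum_integral_uniform_grid _ _ hw, hNτ]
    _ = Q * T ^ (α₀ - 1) / (8 * (α₀ - 1)) * τ ^ 2 := by
        rw [intervalIntegral.integral_const_mul, integral_rpow (.inl (by linarith)),
          Real.zero_rpow (by linarith), sub_zero, show α₀ - 2 + 1 = α₀ - 1 by ring]
        field_simp
end
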